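/- arXiv:1209.1880 — 4 statements merged into one kernel-verified Lean document; each statement's English description precedes it below -/
import Mathlib

section
/- Let a, d, k be positive integers with gcd(a, d) = 1 and 2 ≤ k ≤ a − 1, let S = ⟨a, a+d, …, a+kd⟩, and write a = q k + r with 0 ≤ r < k. Suppose r ≥ 2. Then Ap(S; a) \ {0} = { y_k(a+kd) : y_k ∈ {1, …, q} } ∪ { (a+id) + y_k(a+kd) : y_k ∈ {0, …, q}, i ∈ {1, …, r−1} } ∪ { (a+id) + y_k(a+kd) : y_k ∈ {0, …, q−1}, i ∈ {r, …, k−1} }. -/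
lemma memS_iff (a d k : ℕ) (hk : 0 < k) (z : ℤ) :
    (∃ c : Fin (k + 1) → ℕ, z = ∑ i, (c i : ℤ) * ((a : ℤ) + (i : ℕ) * (d : ℤ))) ↔
    (∃ m s : ℕ, s ≤ m * k ∧ z = (m : ℤ) * a + (s : ℤ) * d) := by
  constructor
  · rintro ⟨c, rfl⟩
    refine ⟨∑ i, c i, ∑ i : Fin (k+1), i.1 * c i, ?_, ?_⟩
    · calc ∑ i : Fin (k+1), i.1 * c i ≤ ∑ i : Fin (k+1), k * c i :=
            Finset.sum_le_sum (fun i _ => Nat.mul_le_mul_right _ (by omega))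
        _ = (∑ i, c i) * k := by rw [← Finset.mul_sum]; ring
    · push_cast
      rw [Finset.sum_mul, Finset.sum_mul, ← Finset.sum_add_distrib]
      apply Finset.sum_congr rfl
      intro i _
      ring
  · rintro ⟨m, s, hle, rfl⟩
    induction m generalizing s with
    | zero =>
      refine ⟨0, ?_⟩
      simp at hle
      simp [hle]
    | succ n ih =>
      set u := min s k with hu
      have hnk : (n+1)*k = n*k + k := by ring
      have h1 : s - u ≤ n * k := by omega
      obtain ⟨c, hc⟩ := ih (s - u) h1
      set j : Fin (k+1) := ⟨u, by omega⟩ with hj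
      refine ⟨fun i => c i + (if i = j then 1 else 0), ?_⟩
      have key : ∀ i : Fin (k+1), ((c i + (if i = j then 1 else 0) : ℕ) : ℤ) *
          ((a : ℤ) + (i.1 : ℤ) * (d : ℤ))
          = (c i : ℤ) * ((a : ℤ) + (i.1 : ℤ) * (d : ℤ))
            + (if i = j then ((a : ℤ) + (i.1 : ℤ) * (d : ℤ)) else 0) := by
        intro i
        by_cases h : i = j <;> simp [h] <;> push_cast <;> ring
      rw [Finset.sum_congr rfl (fun i _ => key i), Finset.sum_add_distrib, ← hc]
      rw [Finset.sum_ite_eq' Finset.univ j (fun i => (a : ℤ) + (i.1 : ℤ) * d)]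
      simp only [Finset.mem_univ, if_true]
      have h3 : (s : ℤ) = ((s - u : ℕ) : ℤ) + (u : ℤ) := by omega
      push_cast
      rw [h3]
      push_cast
      ring

-- ceiling division facts
lemma ceil_ge (k i : ℕ) (hk : 0 < k) : i ≤ ((i + k - 1) / k) * k := by
  have h1 := Nat.div_add_mod (i + k - 1) k
  have h2 := Nat.mod_lt (i + k - 1) hk
  set c := (i + k - 1) / k
  set m := (i + k - 1) % k
  have : k * c = i + k - 1 - m := by omega
  calc i ≤ k * c := by omega
    _ = c * k := Nat.mul_comm _ _

lemma ceil_le (k i : ℕ) (hk : 0 < k) : ((i + k - 1) / k) * k ≤ i + k - 1 :=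
  Nat.div_mul_le_self _ _

lemma ceil_le_of (k i m : ℕ) (hk : 0 < k) (h : i ≤ m * k) : (i + k - 1) / k ≤ m := by
  rw [Nat.div_le_iff_le_mul_add_pred hk]
  calc i + k - 1 ≤ m * k + (k - 1) := by omega
    _ = k * m + (k - 1) := by rw [Nat.mul_comm]

lemma ceil_pos (k i : ℕ) (hk : 0 < k) (hi : 1 ≤ i) : 1 ≤ (i + k - 1) / k := by
  rw [Nat.le_div_iff_mul_le hk]
  omega

lemma ceil_mul (k yk : ℕ) (hk : 0 < k) : (yk * k + k - 1) / k = yk := by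
  have h1 : yk * k + k - 1 = (k - 1) + yk * k := by
    rw [Nat.add_sub_assoc hk, Nat.add_comm]
  rw [h1, Nat.add_mul_div_right _ _ hk, Nat.div_eq_of_lt (by omega)]
  omega

lemma ceil_mul_add (k yk j : ℕ) (hk : 0 < k) (hj1 : 1 ≤ j) (hjk : j < k) :
    (yk * k + j + k - 1) / k = yk + 1 := by
  have h1 : yk * k + j + k - 1 = ((j - 1) + 1 * k) + yk * k := by omega
  rw [h1, Nat.add_mul_div_right _ _ hk, Nat.add_mul_div_right _ _ hk,
    Nat.div_eq_of_lt (by omega)]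
  omega

lemma copr_dvd (a d : ℕ) (hgcd : Nat.gcd a d = 1) (x : ℤ) (h : (a:ℤ) ∣ x * d) : (a:ℤ) ∣ x := by
  have hco : IsCoprime (a:ℤ) (d:ℤ) := by
    rw [Int.isCoprime_iff_gcd_eq_one]
    simpa using hgcd
  exact (IsCoprime.dvd_of_dvd_mul_right hco h)

-- minimality: any semigroup element congruent to i*d mod a (0 ≤ i < a) is w_i + n*a
lemma key4 (a d k m s i : ℕ) (ha : 0 < a) (hk : 0 < k)
    (hgcd : Nat.gcd a d = 1) (hsm : s ≤ m * k) (hia : i < a)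
    (hdvd : (a:ℤ) ∣ ((m:ℤ) * a + s * d) - (i:ℤ) * d) :
    ∃ n : ℕ, (m:ℤ) * a + s * d = (((i + k - 1) / k : ℕ) : ℤ) * a + (i:ℤ) * d + (n:ℤ) * a := by
  have hdvd2 : (a:ℤ) ∣ ((s:ℤ) - i) := by
    apply copr_dvd a d hgcd
    obtain ⟨t, ht⟩ := hdvd
    exact ⟨t - m, by linear_combination ht⟩
  obtain ⟨t, ht⟩ := hdvd2
  have ht0 : 0 ≤ t := by
    by_contra hneg
    push_neg at hneg
    have h1 : t ≤ -1 := by omega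
    have h2 : (a:ℤ) * t ≤ (a:ℤ) * (-1) := mul_le_mul_of_nonneg_left h1 (by positivity)
    have hs0 : (0:ℤ) ≤ s := by positivity
    have hia' : (i:ℤ) < a := by exact_mod_cast hia
    linarith
  set tn := t.toNat with htn
  have htt : (tn:ℤ) = t := Int.toNat_of_nonneg ht0
  have hs : (s:ℤ) = (i:ℤ) + (tn:ℤ) * a := by
    rw [htt]
    linarith [ht]
  have hsn : s = i + tn * a := by exact_mod_cast hs
  have hC : (i + k - 1) / k ≤ m := by
    rw [Nat.div_le_iff_le_mul_add_pred hk]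
    have : i ≤ m * k := by omega
    calc i + k - 1 ≤ m * k + (k - 1) := by omega
      _ = k * m + (k - 1) := by rw [Nat.mul_comm]
  refine ⟨(m - (i + k - 1) / k) + tn * d, ?_⟩
  have hcast : ((m - (i + k - 1) / k : ℕ) : ℤ) = (m:ℤ) - ((i + k - 1) / k : ℕ) := by omega
  push_cast [hcast]
  rw [hs]
  ring

-- w_i - a is not in the semigroup
lemma key5 (a d k i : ℕ) (ha : 0 < a) (hd : 0 < d) (hk : 0 < k)
    (hgcd : Nat.gcd a d = 1) (hi1 : 1 ≤ i) (hia : i < a) :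
    ¬ ∃ m s : ℕ, s ≤ m * k ∧
      (((i + k - 1) / k : ℕ) : ℤ) * a + (i:ℤ) * d - (a:ℤ) = (m:ℤ) * a + (s:ℤ) * d := by
  rintro ⟨m, s, hsm, heq⟩
  set C := (i + k - 1) / k with hCdef
  have hCk1 : i ≤ C * k := ceil_ge k i hk
  have hCk2 : C * k ≤ i + k - 1 := ceil_le k i hk
  have hC1 : 1 ≤ C := ceil_pos k i hk hi1
  have hdvd2 : (a:ℤ) ∣ ((s:ℤ) - i) := by
    apply copr_dvd a d hgcd
    exact ⟨(C:ℤ) - 1 - m, by linear_combination -heq⟩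
  obtain ⟨t, ht⟩ := hdvd2
  have hCeq : (C:ℤ) = 1 + m + t * d := by
    have h1 : ((C:ℤ) - 1 - m - t * d) * a = 0 := by linear_combination heq + d * ht
    have h2 : (C:ℤ) - 1 - m - t * d = 0 := by
      rcases mul_eq_zero.mp h1 with h | h
      · exact h
      · exfalso; have : (a:ℤ) ≠ 0 := by positivity
        exact this h
    linarith
  -- cast the key nat inequalities to ℤ
  have hZ1 : (i:ℤ) ≤ (C:ℤ) * k := by exact_mod_cast hCk1
  have hZ2 : (C:ℤ) * k ≤ (i:ℤ) + k - 1 := by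
    have : ((C * k : ℕ) : ℤ) ≤ ((i + k - 1 : ℕ) : ℤ) := by exact_mod_cast hCk2
    push_cast at this
    omega
  have hZ3 : (s:ℤ) ≤ (m:ℤ) * k := by exact_mod_cast hsm
  have hd' : (1:ℤ) ≤ d := by exact_mod_cast hd
  have hk' : (1:ℤ) ≤ k := by exact_mod_cast hk
  have ha' : (1:ℤ) ≤ a := by exact_mod_cast ha
  have hia' : (i:ℤ) < a := by exact_mod_cast hia
  have hs0 : (0:ℤ) ≤ s := by positivity
  rcases lt_trichotomy t 0 with hlt | hzero | hgt
  · -- t ≤ -1 : s negative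
    have h1 : t ≤ -1 := by omega
    have h2 : (a:ℤ) * t ≤ (a:ℤ) * (-1) := mul_le_mul_of_nonneg_left h1 (by positivity)
    linarith
  · -- t = 0 : s = i, m = C - 1, contradiction with ceiling bounds
    subst hzero
    have hsi : (s:ℤ) = i := by linarith
    have hm : (m:ℤ) = (C:ℤ) - 1 := by linarith
    have hmk : (m:ℤ) * k = (C:ℤ) * k - k := by rw [hm]; ring
    linarith
  · -- t ≥ 1 : s ≥ i + a but m too small
    have h1 : 1 ≤ t := hgt
    have h2 : (a:ℤ) * 1 ≤ (a:ℤ) * t := mul_le_mul_of_nonneg_left h1 (by positivity)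
    have h3 : (1:ℤ) * d ≤ t * d := mul_le_mul_of_nonneg_right h1 (by positivity)
    have hm : (m:ℤ) ≤ (C:ℤ) - 2 := by linarith
    have hmk : (m:ℤ) * k ≤ ((C:ℤ) - 2) * k :=
      mul_le_mul_of_nonneg_right hm (by positivity)
    nlinarith

-- characterization of nonzero Apéry elements
lemma key6 (a d k : ℕ) (ha : 0 < a) (hd : 0 < d) (hk : 0 < k)
    (hgcd : Nat.gcd a d = 1) (z : ℤ)
    (hP : ∃ m s : ℕ, s ≤ m * k ∧ z = (m:ℤ) * a + (s:ℤ) * d)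
    (hPa : ¬ ∃ m s : ℕ, s ≤ m * k ∧ z - (a:ℤ) = (m:ℤ) * a + (s:ℤ) * d)
    (hz : z ≠ 0) :
    ∃ i : ℕ, 1 ≤ i ∧ i < a ∧ z = (((i + k - 1) / k : ℕ) : ℤ) * a + (i:ℤ) * d := by
  obtain ⟨m, s, hsm, rfl⟩ := hP
  set i := s % a with hi
  have hia : i < a := Nat.mod_lt _ ha
  have hsplit : s = a * (s / a) + i := (Nat.div_add_mod s a).symm
  have hdvd : (a:ℤ) ∣ ((m:ℤ) * a + s * d) - (i:ℤ) * d := by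
    refine ⟨(m:ℤ) + (s / a : ℕ) * d, ?_⟩
    have : (s:ℤ) = (a:ℤ) * (s / a : ℕ) + (i:ℤ) := by exact_mod_cast hsplit
    rw [this]; ring
  obtain ⟨n, hn⟩ := key4 a d k m s i ha hk hgcd hsm hia hdvd
  have hn0 : n = 0 := by
    by_contra hne
    apply hPa
    refine ⟨(i + k - 1) / k + (n - 1), i, ?_, ?_⟩
    · have h1 : i ≤ ((i + k - 1) / k) * k := ceil_ge k i hk
      calc i ≤ ((i + k - 1) / k) * k := h1
        _ ≤ ((i + k - 1) / k + (n - 1)) * k := Nat.mul_le_mul_right _ (by omega)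
    · rw [hn]
      have : ((n:ℤ)) = ((n - 1 : ℕ) : ℤ) + 1 := by omega
      rw [this]
      push_cast
      ring
  subst hn0
  have hi1 : 1 ≤ i := by
    by_contra hlt
    have : i = 0 := by omega
    have hC0 : (0 + k - 1) / k = 0 := Nat.div_eq_of_lt (by omega)
    rw [this, hC0] at hn
    norm_num at hn
    exact hz hn
  exact ⟨i, hi1, hia, by rw [hn]; push_cast; ring⟩

-- w_i is a nonzero Apéry element
lemma key7 (a d k i : ℕ) (ha : 0 < a) (hd : 0 < d) (hk : 0 < k)
    (hgcd : Nat.gcd a d = 1) (hi1 : 1 ≤ i) (hia : i < a) :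
    (∃ m s : ℕ, s ≤ m * k ∧
        (((i + k - 1) / k : ℕ) : ℤ) * a + (i:ℤ) * d = (m:ℤ) * a + (s:ℤ) * d) ∧
    (¬ ∃ m s : ℕ, s ≤ m * k ∧
        (((i + k - 1) / k : ℕ) : ℤ) * a + (i:ℤ) * d - (a:ℤ) = (m:ℤ) * a + (s:ℤ) * d) ∧
    (((i + k - 1) / k : ℕ) : ℤ) * a + (i:ℤ) * d ≠ 0 := by
  refine ⟨⟨(i + k - 1) / k, i, ceil_ge k i hk, rfl⟩, key5 a d k i ha hd hk hgcd hi1 hia, ?_⟩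
  have hC1 : 1 ≤ (i + k - 1) / k := ceil_pos k i hk hi1
  have h1 : (1:ℤ) ≤ (((i + k - 1) / k : ℕ) : ℤ) := by exact_mod_cast hC1
  have h2 : (1:ℤ) ≤ (a:ℤ) := by exact_mod_cast ha
  have h3 : (1:ℤ) ≤ (d:ℤ) := by exact_mod_cast hd
  have h4 : (1:ℤ) ≤ (i:ℤ) := by exact_mod_cast hi1
  nlinarith

theorem apery_set_arithmetic_r_ge_two
    (a d k q r : ℕ) (ha : 0 < a) (hd : 0 < d) (hk2 : 2 ≤ k) (hka : k ≤ a - 1)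
    (hgcd : Nat.gcd a d = 1)
    (hqr : a = q * k + r) (hrk : r < k) (hr : 2 ≤ r)
    (S : Set ℤ)
    (hS : S = {z : ℤ | ∃ c : Fin (k + 1) → ℕ,
      z = ∑ i, (c i : ℤ) * ((a : ℤ) + (i : ℕ) * (d : ℤ))}) :
    {x : ℤ | x ∈ S ∧ x - a ∉ S} \ {0} =
      {z : ℤ | ∃ yk : ℕ, 1 ≤ yk ∧ yk ≤ q ∧ z = (yk : ℤ) * ((a : ℤ) + k * d)} ∪
      {z : ℤ | ∃ i yk : ℕ, 1 ≤ i ∧ i ≤ r - 1 ∧ yk ≤ q ∧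
        z = ((a : ℤ) + i * d) + (yk : ℤ) * ((a : ℤ) + k * d)} ∪
      {z : ℤ | ∃ i yk : ℕ, r ≤ i ∧ i ≤ k - 1 ∧ yk ≤ q - 1 ∧
        z = ((a : ℤ) + i * d) + (yk : ℤ) * ((a : ℤ) + k * d)} := by
  have hk : 0 < k := by omega
  have hq1 : 1 ≤ q := by
    rcases Nat.eq_zero_or_pos q with h | h
    · subst h; simp at hqr; omega
    · exact h
  have hSmem : ∀ z : ℤ, z ∈ S ↔ ∃ m s : ℕ, s ≤ m * k ∧ z = (m:ℤ) * a + (s:ℤ) * d := by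
    intro z
    rw [hS]
    exact memS_iff a d k hk z
  ext z
  simp only [Set.mem_diff, Set.mem_setOf_eq, Set.mem_singleton_iff, Set.mem_union]
  constructor
  · rintro ⟨⟨hzS, hznS⟩, hz0⟩
    obtain ⟨i, hi1, hia, hzw⟩ := key6 a d k ha hd hk hgcd z
      ((hSmem z).mp hzS) (fun h => hznS ((hSmem _).mpr h)) hz0
    set yk := i / k with hyk
    set j := i % k with hj
    have hjk : j < k := Nat.mod_lt _ hk
    have hij : i = yk * k + j := by
      rw [hyk, hj, Nat.mul_comm]
      exact (Nat.div_add_mod i k).symm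
    rcases Nat.eq_zero_or_pos j with hj0 | hjpos
    · -- first set
      left; left
      have hyk1 : 1 ≤ yk := by
        rcases Nat.eq_zero_or_pos yk with h | h
        · exfalso; rw [h] at hij; simp at hij; omega
        · exact h
      have hykq : yk ≤ q := by
        by_contra hgt
        push_neg at hgt
        have h1 : (q + 1) * k ≤ yk * k := Nat.mul_le_mul_right _ (by omega)
        have h2 : (q + 1) * k = q * k + k := by ring
        omega
      refine ⟨yk, hyk1, hykq, ?_⟩
      rw [hzw, hij, hj0, Nat.add_zero, ceil_mul k yk hk]
      push_cast
      ring
    · have hceil : (i + k - 1) / k = yk + 1 := by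
        rw [hij]; exact ceil_mul_add k yk j hk hjpos hjk
      have hzform : z = ((a : ℤ) + j * d) + (yk : ℤ) * ((a : ℤ) + k * d) := by
        rw [hzw, hceil, hij]
        push_cast
        ring
      rcases Nat.lt_or_ge j r with hjr | hjr
      · -- second set
        left; right
        have hykq : yk ≤ q := by
          have h1 : yk * k < (q + 1) * k := by
            have h2 : (q + 1) * k = q * k + k := by ring
            omega
          have := Nat.lt_of_mul_lt_mul_right h1
          omega
        exact ⟨j, yk, hjpos, by omega, hykq, hzform⟩
      · -- third set
        right
        have hykq : yk ≤ q - 1 := by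
          have h1 : yk * k < q * k := by omega
          have := Nat.lt_of_mul_lt_mul_right h1
          omega
        exact ⟨j, yk, hjr, by omega, hykq, hzform⟩
  · intro h
    -- reduce all three cases to a single i
    suffices hsuff : ∃ i : ℕ, 1 ≤ i ∧ i < a ∧
        z = (((i + k - 1) / k : ℕ) : ℤ) * a + (i:ℤ) * d by
      obtain ⟨i, hi1, hia, rfl⟩ := hsuff
      obtain ⟨h1, h2, h3⟩ := key7 a d k i ha hd hk hgcd hi1 hia
      exact ⟨⟨(hSmem _).mpr h1, fun hm => h2 ((hSmem _).mp hm)⟩, h3⟩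
    rcases h with (⟨yk, h1, h2, rfl⟩ | ⟨j, yk, hj1, hj2, hykq, rfl⟩) | ⟨j, yk, hj1, hj2, hykq, rfl⟩
    · refine ⟨yk * k, Nat.mul_pos (by omega) (by omega), ?_, ?_⟩
      · have : yk * k ≤ q * k := Nat.mul_le_mul_right _ h2
        omega
      · rw [ceil_mul k yk hk]
        push_cast
        ring
    · refine ⟨yk * k + j, by omega, ?_, ?_⟩
      · have : yk * k ≤ q * k := Nat.mul_le_mul_right _ hykq
        omega
      · rw [ceil_mul_add k yk j hk hj1 (by omega)]
        push_cast
        ring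
    · refine ⟨yk * k + j, by omega, ?_, ?_⟩
      · have h3 : yk * k ≤ (q - 1) * k := Nat.mul_le_mul_right _ hykq
        have h4 : (q - 1) * k + k = q * k := by
          have : q - 1 + 1 = q := by omega
          calc (q - 1) * k + k = (q - 1 + 1) * k := by ring
            _ = q * k := by rw [this]
        omega
      · rw [ceil_mul_add k yk j hk (by omega) (by omega)]
        push_cast
        ring
end

section
/- Let q ≥ 2 and d ≥ 1 be integers with gcd(2q, d) = 1, let a = 2q, S = ⟨a, a+d, a+2d⟩, and for (x_0, x_1, x_2) ∈ ℤ × {0,1} × {0, …, q−1} write [x_0, x_1, x_2] = x_0·a + x_1·(a+d) + x_2·(a+2d). Let (x_0, x_1, x_2) ∈ ℤ × {0,1} × {0, …, q−1} with (x_0, x_2) ∉ {0,1} × {0,1}. If x_2 = 0 then μ_S([x_0, x_1, 0]) = μ_S([x_0 − (q+d), x_1, 0]) + μ_S([x_0 − (q+d) − 1, x_1, q−1]) − μ_S([x_0 − 2(q+d) − 1, x_1, q−1]); and if x_2 ≥ 1 then μ_S([x_0, x_1, x_2]) = μ_S([x_0 − (q+d), x_1, x_2]) + μ_S([x_0 −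 1, x_1, x_2 − 1]) − μ_S([x_0 − (q+d) − 1, x_1, x_2 − 1]). -/
open Classical in
/-- The Möbius function of the locally finite poset `(ℤ, ≤_S)` where `x ≤_S y ↔ y - x ∈ S`. -/
noncomputable def mobius2 (S : Set ℤ) (a b : ℤ) : ℤ :=
  if a = b then 1
  else if b - a ∈ S then
    - ∑ c ∈ (Finset.Ico a b).attach,
        (if ((c : ℤ) - a ∈ S ∧ b - (c : ℤ) ∈ S) then mobius2 S a (c : ℤ) else 0)
  else 0
termination_by (b - a).toNat
decreasing_by
  have := c.2
  rw [Finset.mem_Ico] at this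
  omega

/-- The reduced Möbius function `μ_S(x) = μ_S(0, x)`. -/
noncomputable def mobiusRed (S : Set ℤ) (x : ℤ) : ℤ := mobius2 S 0 x

/-- The representation `[x₀, x₁, x₂] = x₀·a + x₁·(a+d) + x₂·(a+2d)` with `a = 2q`. -/
def bracket (q d : ℕ) (x0 : ℤ) (x1 x2 : ℕ) : ℤ :=
  x0 * (2 * (q : ℤ)) + (x1 : ℤ) * (2 * (q : ℤ) + d) + (x2 : ℤ) * (2 * (q : ℤ) + 2 * d)

namespace MBaux

open Classical

def Sset (q d : ℕ) : Set ℤ := {z : ℤ | ∃ c0 c1 c2 : ℕ,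
      z = (c0 : ℤ) * (2 * (q : ℤ)) + (c1 : ℤ) * (2 * (q : ℤ) + d) +
          (c2 : ℤ) * (2 * (q : ℤ) + 2 * d)}

lemma zero_mem (q d : ℕ) : (0:ℤ) ∈ Sset q d := ⟨0, 0, 0, by push_cast; ring⟩

lemma mem_nonneg {q d : ℕ} {n : ℤ} (h : n ∈ Sset q d) : 0 ≤ n := by
  obtain ⟨c0, c1, c2, rfl⟩ := h
  have h0 : (0:ℤ) ≤ (q:ℤ) := Int.natCast_nonneg q
  have h1 : (0:ℤ) ≤ (d:ℤ) := Int.natCast_nonneg d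
  have h2 : (0:ℤ) ≤ (c0:ℤ) := Int.natCast_nonneg c0
  have h3 : (0:ℤ) ≤ (c1:ℤ) := Int.natCast_nonneg c1
  have h4 : (0:ℤ) ≤ (c2:ℤ) := Int.natCast_nonneg c2
  nlinarith

lemma add_mem {q d : ℕ} {m n : ℤ} (hm : m ∈ Sset q d) (hn : n ∈ Sset q d) :
    m + n ∈ Sset q d := by
  obtain ⟨a0, a1, a2, rfl⟩ := hm
  obtain ⟨b0, b1, b2, rfl⟩ := hn
  exact ⟨a0 + b0, a1 + b1, a2 + b2, by push_cast; ring⟩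

lemma mem_iff {q d : ℕ} (hq : 1 ≤ q) (n : ℤ) :
    n ∈ Sset q d ↔ ∃ (x0 x1 x2 : ℕ), x1 ≤ 1 ∧ x2 ≤ q - 1 ∧
      n = (x0:ℤ) * (2*(q:ℤ)) + (x1:ℤ) * (2*(q:ℤ)+(d:ℤ)) + (x2:ℤ) * (2*(q:ℤ)+2*(d:ℤ)) := by
  constructor
  · rintro ⟨c0, c1, c2, rfl⟩
    obtain ⟨m, r1, hc1, hr1⟩ : ∃ m r1, c1 = 2*m + r1 ∧ r1 ≤ 1 := ⟨c1/2, c1 % 2, by omega, by omega⟩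
    obtain ⟨s, r2, hc2, hr2⟩ : ∃ s r2, c2 + m = q*s + r2 ∧ r2 ≤ q - 1 := by
      refine ⟨(c2+m)/q, (c2+m)%q, (Nat.div_add_mod (c2+m) q).symm, ?_⟩
      have := Nat.mod_lt (c2+m) (show 0 < q by omega)
      omega
    refine ⟨c0 + m + s*(q+d), r1, r2, hr1, hr2, ?_⟩
    have h1 : (c1:ℤ) = 2*(m:ℤ) + (r1:ℤ) := by exact_mod_cast hc1
    have h2 : (c2:ℤ) + (m:ℤ) = (q:ℤ)*(s:ℤ) + (r2:ℤ) := by exact_mod_cast hc2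
    push_cast
    linear_combination (2*(q:ℤ)+(d:ℤ)) * h1 + (2*(q:ℤ)+2*(d:ℤ)) * h2
  · rintro ⟨x0, x1, x2, -, -, rfl⟩
    exact ⟨x0, x1, x2, rfl⟩

lemma uniq {q d : ℕ} (hq : 2 ≤ q) (hgcd : Nat.gcd (2*q) d = 1)
    (x0 y0 : ℤ) (x1 x2 y1 y2 : ℕ)
    (hx1 : x1 ≤ 1) (hx2 : x2 ≤ q - 1) (hy1 : y1 ≤ 1) (hy2 : y2 ≤ q - 1)
    (h : x0 * (2*(q:ℤ)) + (x1:ℤ) * (2*(q:ℤ)+(d:ℤ)) + (x2:ℤ) * (2*(q:ℤ)+2*(d:ℤ))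
       = y0 * (2*(q:ℤ)) + (y1:ℤ) * (2*(q:ℤ)+(d:ℤ)) + (y2:ℤ) * (2*(q:ℤ)+2*(d:ℤ))) :
    x0 = y0 ∧ x1 = y1 ∧ x2 = y2 := by
  have hq' : (2:ℤ) ≤ (q:ℤ) := by exact_mod_cast hq
  have hco : IsCoprime (2*(q:ℤ)) (d:ℤ) := by
    have e : ((2*q : ℕ) : ℤ) = 2*(q:ℤ) := by push_cast; ring
    rw [← e, Int.isCoprime_iff_gcd_eq_one, Int.gcd_natCast_natCast]
    exact hgcd
  have hdvd : (2*(q:ℤ)) ∣ (((x1:ℤ)+2*(x2:ℤ)) - ((y1:ℤ)+2*(y2:ℤ))) * (d:ℤ) :=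
    ⟨y0 + (y1:ℤ) + (y2:ℤ) - x0 - (x1:ℤ) - (x2:ℤ), by linear_combination h⟩
  obtain ⟨k, hk⟩ := hco.dvd_of_dvd_mul_right hdvd
  have c1 : (0:ℤ) ≤ (x1:ℤ) := Int.natCast_nonneg x1
  have c2 : (0:ℤ) ≤ (x2:ℤ) := Int.natCast_nonneg x2
  have c3 : (0:ℤ) ≤ (y1:ℤ) := Int.natCast_nonneg y1
  have c4 : (0:ℤ) ≤ (y2:ℤ) := Int.natCast_nonneg y2
  have b1 : (x1:ℤ) ≤ 1 := by exact_mod_cast hx1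
  have b3 : (y1:ℤ) ≤ 1 := by exact_mod_cast hy1
  have b2 : (x2:ℤ) ≤ (q:ℤ) - 1 := by
    have : x2 + 1 ≤ q := by omega
    have : (x2:ℤ) + 1 ≤ (q:ℤ) := by exact_mod_cast this
    linarith
  have b4 : (y2:ℤ) ≤ (q:ℤ) - 1 := by
    have : y2 + 1 ≤ q := by omega
    have : (y2:ℤ) + 1 ≤ (q:ℤ) := by exact_mod_cast this
    linarith
  have hk0 : ((x1:ℤ)+2*(x2:ℤ)) - ((y1:ℤ)+2*(y2:ℤ)) = 0 := by
    rcases lt_trichotomy k 0 with hk' | hk' | hk'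
    · exfalso
      have h1 : k ≤ -1 := by omega
      have h2 : 2*(q:ℤ)*k ≤ 2*(q:ℤ)*(-1) := by
        apply mul_le_mul_of_nonneg_left h1
        linarith
      linarith [hk]
    · rw [hk', mul_zero] at hk; exact hk
    · exfalso
      have h1 : (1:ℤ) ≤ k := by omega
      have h2 : 2*(q:ℤ)*1 ≤ 2*(q:ℤ)*k := by
        apply mul_le_mul_of_nonneg_left h1
        linarith
      linarith [hk]
  have hx12 : x1 + 2*x2 = y1 + 2*y2 := by
    have : (x1:ℤ)+2*(x2:ℤ) = (y1:ℤ)+2*(y2:ℤ) := by linarith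
    exact_mod_cast this
  have h12 : x1 = y1 ∧ x2 = y2 := by omega
  refine ⟨?_, h12.1, h12.2⟩
  have e1 : (x1:ℤ) = (y1:ℤ) := by exact_mod_cast h12.1
  have e2 : (x2:ℤ) = (y2:ℤ) := by exact_mod_cast h12.2
  have h2 : x0 * (2*(q:ℤ)) = y0 * (2*(q:ℤ)) := by
    linear_combination h - (2*(q:ℤ)+(d:ℤ))*e1 - (2*(q:ℤ)+2*(d:ℤ))*e2
  exact mul_right_cancel₀ (by linarith : (2*(q:ℤ)) ≠ 0) h2

noncomputable def chi (q d : ℕ) (n : ℤ) : ℤ := if n ∈ Sset q d then 1 else 0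

noncomputable def ee (q d : ℕ) (n : ℤ) : ℤ :=
  if ∃ y1 y2 : ℕ, y1 ≤ 1 ∧ y2 ≤ q - 1 ∧
      n = (y1:ℤ) * (2*(q:ℤ)+(d:ℤ)) + (y2:ℤ) * (2*(q:ℤ)+2*(d:ℤ)) then 1 else 0

def dl (n c : ℤ) : ℤ := if n = c then 1 else 0

lemma dl_shift (n c c' : ℤ) : dl (n - c) c' = dl n (c + c') := by
  unfold dl; split_ifs <;> omega

lemma chi_neg {q d : ℕ} {n : ℤ} (h : n < 0) : chi q d n = 0 :=
  if_neg (fun hm => absurd (mem_nonneg hm) (by omega))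

lemma chi_zero (q d : ℕ) : chi q d 0 = 1 := if_pos (zero_mem q d)

lemma ee_neg {q d : ℕ} {n : ℤ} (h : n < 0) : ee q d n = 0 := by
  rw [ee, if_neg]
  rintro ⟨y1, y2, -, -, rfl⟩
  have h0 : (0:ℤ) ≤ (q:ℤ) := Int.natCast_nonneg q
  have h1 : (0:ℤ) ≤ (d:ℤ) := Int.natCast_nonneg d
  have h2 : (0:ℤ) ≤ (y1:ℤ) := Int.natCast_nonneg y1
  have h3 : (0:ℤ) ≤ (y2:ℤ) := Int.natCast_nonneg y2
  nlinarith

lemma T1 {q d : ℕ} (hq : 2 ≤ q) (hgcd : Nat.gcd (2*q) d = 1) (n : ℤ) :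
    chi q d n - chi q d (n - 2*(q:ℤ)) = ee q d n := by
  have hq1 : 1 ≤ q := by omega
  by_cases h2 : n - 2*(q:ℤ) ∈ Sset q d
  · have hn : n ∈ Sset q d := by
      have ha : (2*(q:ℤ)) ∈ Sset q d := ⟨1, 0, 0, by push_cast; ring⟩
      have := add_mem h2 ha
      simpa using this
    rw [chi, chi, if_pos hn, if_pos h2, ee, if_neg]
    · ring
    rintro ⟨y1, y2, hy1, hy2, hrep⟩
    rw [mem_iff hq1] at h2
    obtain ⟨z0, z1, z2, hz1, hz2, hz⟩ := h2
    have heq : (0:ℤ) * (2*(q:ℤ)) + (y1:ℤ) * (2*(q:ℤ)+(d:ℤ)) + (y2:ℤ) * (2*(q:ℤ)+2*(d:ℤ))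
        = ((z0:ℤ)+1) * (2*(q:ℤ)) + (z1:ℤ) * (2*(q:ℤ)+(d:ℤ)) + (z2:ℤ) * (2*(q:ℤ)+2*(d:ℤ)) := by
      linear_combination hz - hrep
    have h0 := (uniq hq hgcd 0 ((z0:ℤ)+1) y1 y2 z1 z2 hy1 hy2 hz1 hz2 heq).1
    have hz0 : (0:ℤ) ≤ (z0:ℤ) := Int.natCast_nonneg z0
    omega
  · rw [chi, chi, if_neg h2]
    by_cases hn : n ∈ Sset q d
    · rw [if_pos hn]
      rw [mem_iff hq1] at hn
      obtain ⟨z0, z1, z2, hz1, hz2, hz⟩ := hn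
      have hz0 : z0 = 0 := by
        by_contra hz0
        obtain ⟨z0', rfl⟩ : ∃ z0', z0 = z0' + 1 := ⟨z0 - 1, by omega⟩
        apply h2
        rw [mem_iff hq1]
        refine ⟨z0', z1, z2, hz1, hz2, ?_⟩
        push_cast at hz ⊢
        linear_combination hz
      subst hz0
      rw [ee, if_pos ⟨z1, z2, hz1, hz2, by rw [hz]; push_cast; ring⟩]
      ring
    · rw [if_neg hn, ee, if_neg]
      · ring
      rintro ⟨y1, y2, hy1, hy2, rfl⟩
      exact hn ((mem_iff hq1 _).mpr ⟨0, y1, y2, hy1, hy2, by push_cast; ring⟩)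

lemma T2 {q d : ℕ} (hq : 2 ≤ q) (hd : 1 ≤ d) (hgcd : Nat.gcd (2*q) d = 1) (n : ℤ) :
    ee q d n - ee q d (n - (2*(q:ℤ)+2*(d:ℤ))) =
      dl n 0 + dl n (2*(q:ℤ)+(d:ℤ)) - dl n ((q:ℤ)*(2*(q:ℤ)+2*(d:ℤ)))
        - dl n (2*(q:ℤ)+(d:ℤ) + (q:ℤ)*(2*(q:ℤ)+2*(d:ℤ))) := by
  have hq' : (2:ℤ) ≤ (q:ℤ) := by exact_mod_cast hq
  have hd' : (1:ℤ) ≤ (d:ℤ) := by exact_mod_cast hd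
  have hq1 : (1:ℕ) ≤ q - 1 := by omega
  have hcq : ((q:ℤ) - 1) = ((q - 1 : ℕ) : ℤ) := by
    have : ((q - 1 : ℕ) : ℤ) = (q:ℤ) - 1 := by
      rw [Nat.cast_sub (by omega : 1 ≤ q)]; push_cast; ring
    omega
  by_cases h0 : n = 0
  · subst h0
    rw [ee, if_pos ⟨0, 0, by omega, by omega, by push_cast; ring⟩]
    rw [ee_neg (by nlinarith : (0:ℤ) - (2*(q:ℤ)+2*(d:ℤ)) < 0)]
    unfold dl
    rw [if_pos rfl, if_neg (by intro h; nlinarith), if_neg (by intro h; nlinarith),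
        if_neg (by intro h; nlinarith)]
    ring
  by_cases h1 : n = 2*(q:ℤ)+(d:ℤ)
  · subst h1
    rw [ee, if_pos ⟨1, 0, by omega, by omega, by push_cast; ring⟩]
    rw [ee_neg (by nlinarith : (2*(q:ℤ)+(d:ℤ)) - (2*(q:ℤ)+2*(d:ℤ)) < 0)]
    unfold dl
    rw [if_neg (by intro h; nlinarith), if_pos rfl, if_neg (by intro h; nlinarith),
        if_neg (by intro h; nlinarith)]
    ring
  by_cases h2 : n = (q:ℤ)*(2*(q:ℤ)+2*(d:ℤ))
  · subst h2
    rw [ee, if_neg, ee, if_pos]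
    · unfold dl
      rw [if_neg (by intro h; nlinarith), if_neg (by intro h; nlinarith), if_pos rfl,
          if_neg (by intro h; nlinarith)]
      ring
    · refine ⟨0, q - 1, by omega, le_refl _, ?_⟩
      rw [← hcq]; push_cast; ring
    · rintro ⟨y1, y2, hy1, hy2, hrep⟩
      have heq : (0:ℤ) * (2*(q:ℤ)) + (y1:ℤ) * (2*(q:ℤ)+(d:ℤ)) + (y2:ℤ) * (2*(q:ℤ)+2*(d:ℤ))
          = ((q:ℤ)+(d:ℤ)) * (2*(q:ℤ)) + ((0:ℕ):ℤ) * (2*(q:ℤ)+(d:ℤ)) + ((0:ℕ):ℤ) * (2*(q:ℤ)+2*(d:ℤ)) := by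
        push_cast
        linear_combination -hrep
      have h0 := (uniq hq hgcd 0 ((q:ℤ)+(d:ℤ)) y1 y2 0 0 hy1 hy2 (by omega) (by omega) heq).1
      nlinarith
  by_cases h3 : n = 2*(q:ℤ)+(d:ℤ) + (q:ℤ)*(2*(q:ℤ)+2*(d:ℤ))
  · subst h3
    rw [ee, if_neg, ee, if_pos]
    · unfold dl
      rw [if_neg (by intro h; nlinarith), if_neg (by intro h; nlinarith),
          if_neg (by intro h; nlinarith), if_pos rfl]
      ring
    · refine ⟨1, q - 1, by omega, le_refl _, ?_⟩
      rw [← hcq]; push_cast; ring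
    · rintro ⟨y1, y2, hy1, hy2, hrep⟩
      have heq : (0:ℤ) * (2*(q:ℤ)) + (y1:ℤ) * (2*(q:ℤ)+(d:ℤ)) + (y2:ℤ) * (2*(q:ℤ)+2*(d:ℤ))
          = ((q:ℤ)+(d:ℤ)) * (2*(q:ℤ)) + ((1:ℕ):ℤ) * (2*(q:ℤ)+(d:ℤ)) + ((0:ℕ):ℤ) * (2*(q:ℤ)+2*(d:ℤ)) := by
        push_cast
        linear_combination -hrep
      have h0 := (uniq hq hgcd 0 ((q:ℤ)+(d:ℤ)) y1 y2 1 0 hy1 hy2 (by omega) (by omega) heq).1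
      nlinarith
  -- generic case
  have hdl : dl n 0 = 0 := if_neg h0
  have hdl1 : dl n (2*(q:ℤ)+(d:ℤ)) = 0 := if_neg h1
  have hdl2 : dl n ((q:ℤ)*(2*(q:ℤ)+2*(d:ℤ))) = 0 := if_neg h2
  have hdl3 : dl n (2*(q:ℤ)+(d:ℤ) + (q:ℤ)*(2*(q:ℤ)+2*(d:ℤ))) = 0 := if_neg h3
  rw [hdl, hdl1, hdl2, hdl3]
  by_cases he : ∃ y1 y2 : ℕ, y1 ≤ 1 ∧ y2 ≤ q - 1 ∧
      n = (y1:ℤ) * (2*(q:ℤ)+(d:ℤ)) + (y2:ℤ) * (2*(q:ℤ)+2*(d:ℤ))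
  · obtain ⟨y1, y2, hy1, hy2, hrep⟩ := he
    rcases Nat.eq_zero_or_pos y2 with hy20 | hy20
    · exfalso
      subst hy20
      interval_cases y1
      · exact h0 (by rw [hrep]; push_cast; ring)
      · exact h1 (by rw [hrep]; push_cast; ring)
    · obtain ⟨y2', rfl⟩ : ∃ y2', y2 = y2' + 1 := ⟨y2 - 1, by omega⟩
      rw [ee, if_pos ⟨y1, y2' + 1, hy1, hy2, hrep⟩]
      rw [ee, if_pos ⟨y1, y2', hy1, by omega, by push_cast at hrep ⊢; linear_combination hrep⟩]
      ring
  · rw [ee, if_neg he, ee, if_neg]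
    · ring
    rintro ⟨z1, z2, hz1, hz2, hz⟩
    by_cases hz2' : z2 + 1 ≤ q - 1
    · exact he ⟨z1, z2 + 1, hz1, hz2', by push_cast; push_cast at hz; linear_combination hz⟩
    · have hz2q : z2 = q - 1 := by omega
      subst hz2q
      have hzc : ((q - 1 : ℕ) : ℤ) = (q:ℤ) - 1 := by omega
      rw [hzc] at hz
      interval_cases z1
      · exact h2 (by push_cast at hz; linear_combination hz)
      · exact h3 (by push_cast at hz; linear_combination hz)
lemma C3 {q d : ℕ} (hq : 2 ≤ q) (hd : 1 ≤ d) (hgcd : Nat.gcd (2*q) d = 1) (n : ℤ) :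
    chi q d n - chi q d (n - 2*(q:ℤ)) - chi q d (n - (2*(q:ℤ)+(d:ℤ)))
      - chi q d (n - (2*(q:ℤ)+2*(d:ℤ)))
      + chi q d (n - (4*(q:ℤ)+(d:ℤ))) + chi q d (n - (4*(q:ℤ)+2*(d:ℤ)))
      + chi q d (n - (4*(q:ℤ)+3*(d:ℤ))) - chi q d (n - (6*(q:ℤ)+3*(d:ℤ)))
    = dl n 0 - dl n ((q:ℤ)*(2*(q:ℤ)+2*(d:ℤ))) - dl n (4*(q:ℤ)+2*(d:ℤ))
      + dl n ((q:ℤ)*(2*(q:ℤ)+2*(d:ℤ)) + (4*(q:ℤ)+2*(d:ℤ))) := by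
  have t1 := T1 hq hgcd n
  have t2 := T1 hq hgcd (n - (2*(q:ℤ)+(d:ℤ)))
  have t3 := T1 hq hgcd (n - (2*(q:ℤ)+2*(d:ℤ)))
  have t4 := T1 hq hgcd (n - (4*(q:ℤ)+3*(d:ℤ)))
  have u1 := T2 hq hd hgcd n
  have u2 := T2 hq hd hgcd (n - (2*(q:ℤ)+(d:ℤ)))
  rw [show n - (2*(q:ℤ)+(d:ℤ)) - 2*(q:ℤ) = n - (4*(q:ℤ)+(d:ℤ)) by ring] at t2
  rw [show n - (2*(q:ℤ)+2*(d:ℤ)) - 2*(q:ℤ) = n - (4*(q:ℤ)+2*(d:ℤ)) by ring] at t3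
  rw [show n - (4*(q:ℤ)+3*(d:ℤ)) - 2*(q:ℤ) = n - (6*(q:ℤ)+3*(d:ℤ)) by ring] at t4
  rw [show n - (2*(q:ℤ)+(d:ℤ)) - (2*(q:ℤ)+2*(d:ℤ)) = n - (4*(q:ℤ)+3*(d:ℤ)) by ring] at u2
  rw [dl_shift, dl_shift, dl_shift, dl_shift] at u2
  rw [show (2*(q:ℤ)+(d:ℤ)) + 0 = 2*(q:ℤ)+(d:ℤ) by ring] at u2
  rw [show (2*(q:ℤ)+(d:ℤ)) + (2*(q:ℤ)+(d:ℤ)) = 4*(q:ℤ)+2*(d:ℤ) by ring] at u2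
  rw [show (2*(q:ℤ)+(d:ℤ)) + ((q:ℤ)*(2*(q:ℤ)+2*(d:ℤ))) = 2*(q:ℤ)+(d:ℤ) + (q:ℤ)*(2*(q:ℤ)+2*(d:ℤ)) by ring] at u2
  rw [show (2*(q:ℤ)+(d:ℤ)) + (2*(q:ℤ)+(d:ℤ) + (q:ℤ)*(2*(q:ℤ)+2*(d:ℤ)))
      = (q:ℤ)*(2*(q:ℤ)+2*(d:ℤ)) + (4*(q:ℤ)+2*(d:ℤ)) by ring] at u2
  linarith [t1, t2, t3, t4, u1, u2]

lemma mured_not_mem {q d : ℕ} {m : ℤ} (h : m ∉ Sset q d) : mobiusRed (Sset q d) m = 0 := by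
  have h0 : (0:ℤ) ≠ m := by rintro rfl; exact h (zero_mem q d)
  rw [mobiusRed, mobius2, if_neg h0, if_neg (by simpa using h)]

lemma mured_neg {q d : ℕ} {m : ℤ} (h : m < 0) : mobiusRed (Sset q d) m = 0 :=
  mured_not_mem (fun hm => absurd (mem_nonneg hm) (by omega))

lemma mured_zero (q d : ℕ) : mobiusRed (Sset q d) 0 = 1 := by
  rw [mobiusRed, mobius2, if_pos rfl]

lemma muconv (q d : ℕ) (n : ℤ) :
    ∑ m ∈ Finset.Icc (0:ℤ) n, mobiusRed (Sset q d) m * chi q d (n - m) = dl n 0 := by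
  rcases lt_trichotomy n 0 with h | h | h
  · rw [Finset.Icc_eq_empty (by omega), Finset.sum_empty, dl, if_neg (by omega)]
  · subst h
    rw [Finset.Icc_self, Finset.sum_singleton, sub_zero, chi_zero, mured_zero, dl, if_pos rfl]
    ring
  · have hdl : dl n 0 = 0 := if_neg (by omega)
    rw [hdl]
    by_cases hn : n ∈ Sset q d
    · have key : mobius2 (Sset q d) 0 n
          = - ∑ c ∈ (Finset.Ico (0:ℤ) n),
              (if (c ∈ Sset q d ∧ n - c ∈ Sset q d) then mobius2 (Sset q d) 0 c else 0) := by
        rw [mobius2, if_neg (by omega : ¬ (0:ℤ) = n)]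
        rw [if_pos (show n - 0 ∈ Sset q d by simpa using hn)]
        rw [Finset.sum_attach (Finset.Ico (0:ℤ) n)
          (fun c => if (c - 0 ∈ Sset q d ∧ n - c ∈ Sset q d) then mobius2 (Sset q d) 0 c else 0)]
        simp only [sub_zero]
      have hicc : Finset.Icc (0:ℤ) n = insert n (Finset.Ico 0 n) := by
        ext x; simp only [Finset.mem_Icc, Finset.mem_Ico, Finset.mem_insert]; omega
      rw [hicc, Finset.sum_insert (by simp [Finset.mem_Ico])]
      have hsum : ∑ m ∈ Finset.Ico (0:ℤ) n, mobiusRed (Sset q d) m * chi q d (n - m)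
          = ∑ m ∈ Finset.Ico (0:ℤ) n,
              (if (m ∈ Sset q d ∧ n - m ∈ Sset q d) then mobius2 (Sset q d) 0 m else 0) := by
        apply Finset.sum_congr rfl
        intro m _
        by_cases h1 : m ∈ Sset q d
        · by_cases h2 : n - m ∈ Sset q d
          · rw [if_pos ⟨h1, h2⟩, chi, if_pos h2, mul_one]; rfl
          · rw [if_neg (fun hc => h2 hc.2), chi, if_neg h2, mul_zero]
        · rw [if_neg (fun hc => h1 hc.1), mured_not_mem h1, zero_mul]
      rw [hsum, sub_self, chi_zero, mul_one]
      rw [show mobiusRed (Sset q d) n = mobius2 (Sset q d) 0 n from rfl, key]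
      ring
    · apply Finset.sum_eq_zero
      intro m _
      by_cases h1 : m ∈ Sset q d
      · have h2 : n - m ∉ Sset q d := by
          intro h2
          exact hn (by simpa using add_mem h1 h2)
        rw [chi, if_neg h2, mul_zero]
      · rw [mured_not_mem h1, zero_mul]

lemma muconv' (q d : ℕ) (L n : ℤ) (hL : L ≤ 0) :
    ∑ m ∈ Finset.Icc L n, mobiusRed (Sset q d) m * chi q d (n - m) = dl n 0 := by
  rw [← muconv q d n]
  symm
  apply Finset.sum_subset (Finset.Icc_subset_Icc_left hL)
  intro x hx hnx
  have hx' : x < 0 := by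
    simp only [Finset.mem_Icc] at hx hnx
    omega
  rw [mured_neg hx', zero_mul]

lemma muconv_shift (q d : ℕ) (c n : ℤ) (hc : 0 ≤ c) :
    ∑ m ∈ Finset.Icc (0:ℤ) n, mobiusRed (Sset q d) (m - c) * chi q d (n - m) = dl n c := by
  have hmap : Finset.Icc (0:ℤ) n = Finset.map (addLeftEmbedding c) (Finset.Icc (-c) (n - c)) := by
    rw [Finset.map_add_left_Icc]
    congr 1 <;> ring
  rw [hmap, Finset.sum_map]
  have hcong : ∀ m' ∈ Finset.Icc (-c) (n - c),
      mobiusRed (Sset q d) ((addLeftEmbedding c) m' - c) * chi q d (n - (addLeftEmbedding c) m')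
        = mobiusRed (Sset q d) m' * chi q d ((n - c) - m') := by
    intro m' _
    simp only [addLeftEmbedding_apply]
    rw [show c + m' - c = m' by ring, show n - (c + m') = (n - c) - m' by ring]
  rw [Finset.sum_congr rfl hcong, muconv' q d (-c) (n - c) (by omega), dl_shift]
  rw [add_zero]

lemma dlconv (q d : ℕ) (c n : ℤ) (hc : 0 ≤ c) :
    ∑ m ∈ Finset.Icc (0:ℤ) n, dl m c * chi q d (n - m) = chi q d (n - c) := by
  have hcong : ∀ m ∈ Finset.Icc (0:ℤ) n,
      dl m c * chi q d (n - m) = if m = c then chi q d (n - m) else 0 := by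
    intro m _
    unfold dl
    split_ifs <;> ring
  rw [Finset.sum_congr rfl hcong]
  rw [Finset.sum_ite_eq' (Finset.Icc (0:ℤ) n) c (fun m => chi q d (n - m))]
  by_cases hcn : c ∈ Finset.Icc (0:ℤ) n
  · rw [if_pos hcn]
  · rw [if_neg hcn]
    have : n - c < 0 := by
      simp only [Finset.mem_Icc] at hcn
      omega
    rw [chi_neg this]
def Pfun (q d : ℕ) (n : ℤ) : ℤ :=
  dl n 0 - dl n (2*(q:ℤ)) - dl n (2*(q:ℤ)+(d:ℤ)) - dl n (2*(q:ℤ)+2*(d:ℤ))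
  + dl n (4*(q:ℤ)+(d:ℤ)) + dl n (4*(q:ℤ)+2*(d:ℤ)) + dl n (4*(q:ℤ)+3*(d:ℤ))
  - dl n (6*(q:ℤ)+3*(d:ℤ))

lemma Pconv {q d : ℕ} (hq : 2 ≤ q) (hd : 1 ≤ d) (hgcd : Nat.gcd (2*q) d = 1) (n : ℤ) :
    ∑ m ∈ Finset.Icc (0:ℤ) n, Pfun q d m * chi q d (n - m)
      = dl n 0 - dl n ((q:ℤ)*(2*(q:ℤ)+2*(d:ℤ))) - dl n (4*(q:ℤ)+2*(d:ℤ))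
        + dl n ((q:ℤ)*(2*(q:ℤ)+2*(d:ℤ)) + (4*(q:ℤ)+2*(d:ℤ))) := by
  have hcong : ∀ m ∈ Finset.Icc (0:ℤ) n, Pfun q d m * chi q d (n - m)
      = dl m 0 * chi q d (n-m) - dl m (2*(q:ℤ)) * chi q d (n-m)
        - dl m (2*(q:ℤ)+(d:ℤ)) * chi q d (n-m) - dl m (2*(q:ℤ)+2*(d:ℤ)) * chi q d (n-m)
        + dl m (4*(q:ℤ)+(d:ℤ)) * chi q d (n-m) + dl m (4*(q:ℤ)+2*(d:ℤ)) * chi q d (n-m)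
        + dl m (4*(q:ℤ)+3*(d:ℤ)) * chi q d (n-m) - dl m (6*(q:ℤ)+3*(d:ℤ)) * chi q d (n-m) := by
    intro m _
    unfold Pfun
    ring
  rw [Finset.sum_congr rfl hcong]
  simp only [Finset.sum_sub_distrib, Finset.sum_add_distrib]
  rw [dlconv q d 0 n le_rfl, dlconv q d _ n (by positivity), dlconv q d _ n (by positivity),
      dlconv q d _ n (by positivity), dlconv q d _ n (by positivity),
      dlconv q d _ n (by positivity), dlconv q d _ n (by positivity),
      dlconv q d _ n (by positivity)]
  rw [sub_zero]
  linarith [C3 hq hd hgcd n]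

lemma mured_rec {q d : ℕ} (hq : 2 ≤ q) (hd : 1 ≤ d) (hgcd : Nat.gcd (2*q) d = 1) (n : ℤ) :
    mobiusRed (Sset q d) n
      - mobiusRed (Sset q d) (n - (q:ℤ)*(2*(q:ℤ)+2*(d:ℤ)))
      - mobiusRed (Sset q d) (n - (4*(q:ℤ)+2*(d:ℤ)))
      + mobiusRed (Sset q d) (n - ((q:ℤ)*(2*(q:ℤ)+2*(d:ℤ)) + (4*(q:ℤ)+2*(d:ℤ))))
      = Pfun q d n := by
  have hA : (0:ℤ) ≤ (q:ℤ)*(2*(q:ℤ)+2*(d:ℤ)) := by positivity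
  have hB : (0:ℤ) ≤ 4*(q:ℤ)+2*(d:ℤ) := by positivity
  have hAB : (0:ℤ) ≤ (q:ℤ)*(2*(q:ℤ)+2*(d:ℤ)) + (4*(q:ℤ)+2*(d:ℤ)) := by positivity
  set G : ℤ → ℤ := fun m => mobiusRed (Sset q d) m
      - mobiusRed (Sset q d) (m - (q:ℤ)*(2*(q:ℤ)+2*(d:ℤ)))
      - mobiusRed (Sset q d) (m - (4*(q:ℤ)+2*(d:ℤ)))
      + mobiusRed (Sset q d) (m - ((q:ℤ)*(2*(q:ℤ)+2*(d:ℤ)) + (4*(q:ℤ)+2*(d:ℤ))))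
      - Pfun q d m with hG
  have hGdef : ∀ m : ℤ, G m = mobiusRed (Sset q d) m
      - mobiusRed (Sset q d) (m - (q:ℤ)*(2*(q:ℤ)+2*(d:ℤ)))
      - mobiusRed (Sset q d) (m - (4*(q:ℤ)+2*(d:ℤ)))
      + mobiusRed (Sset q d) (m - ((q:ℤ)*(2*(q:ℤ)+2*(d:ℤ)) + (4*(q:ℤ)+2*(d:ℤ))))
      - Pfun q d m := fun m => rfl
  suffices hsuff : ∀ m : ℤ, G m = 0 by
    have := hsuff n
    rw [hGdef n] at this
    linarith
  have hneg : ∀ m : ℤ, m < 0 → G m = 0 := by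
    intro m hm
    rw [hGdef m]
    have hz : ∀ c : ℤ, 0 ≤ c → dl m c = 0 := fun c hc => if_neg (by omega)
    have hPz : Pfun q d m = 0 := by
      unfold Pfun
      rw [hz 0 le_rfl, hz _ (by positivity), hz _ (by positivity), hz _ (by positivity),
          hz _ (by positivity), hz _ (by positivity), hz _ (by positivity), hz _ (by positivity)]
      ring
    rw [hPz, mured_neg hm, mured_neg (by linarith), mured_neg (by linarith),
        mured_neg (by linarith)]
    ring
  have hconv : ∀ m : ℤ, ∑ k ∈ Finset.Icc (0:ℤ) m, G k * chi q d (m - k) = 0 := by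
    intro m
    have hcong : ∀ k ∈ Finset.Icc (0:ℤ) m, G k * chi q d (m - k)
        = mobiusRed (Sset q d) k * chi q d (m-k)
          - mobiusRed (Sset q d) (k - (q:ℤ)*(2*(q:ℤ)+2*(d:ℤ))) * chi q d (m-k)
          - mobiusRed (Sset q d) (k - (4*(q:ℤ)+2*(d:ℤ))) * chi q d (m-k)
          + mobiusRed (Sset q d) (k - ((q:ℤ)*(2*(q:ℤ)+2*(d:ℤ)) + (4*(q:ℤ)+2*(d:ℤ)))) * chi q d (m-k)
          - Pfun q d k * chi q d (m-k) := by
      intro k _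
      rw [hGdef k]
      ring
    rw [Finset.sum_congr rfl hcong]
    simp only [Finset.sum_sub_distrib, Finset.sum_add_distrib]
    rw [muconv q d m, muconv_shift q d _ m hA, muconv_shift q d _ m hB,
        muconv_shift q d _ m hAB, Pconv hq hd hgcd m]
    ring
  have key : ∀ N : ℕ, ∀ m : ℤ, m ≤ (N:ℤ) → G m = 0 := by
    intro N
    induction N with
    | zero =>
      intro m hm
      rw [Nat.cast_zero] at hm
      rcases lt_or_eq_of_le hm with h | h
      · exact hneg m h
      · subst h
        have h0 := hconv 0
        rw [Finset.Icc_self, Finset.sum_singleton, sub_self, chi_zero, mul_one] at h0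
        exact h0
    | succ N ih =>
      intro m hm
      push_cast at hm
      rcases le_or_gt m (N:ℤ) with h | h
      · exact ih m h
      · have hm0 : 0 ≤ m := by
          have : (0:ℤ) ≤ (N:ℤ) := Int.natCast_nonneg N
          omega
        have hc := hconv m
        rw [show Finset.Icc (0:ℤ) m = insert m (Finset.Icc 0 (m-1)) from by
          ext x; simp only [Finset.mem_Icc, Finset.mem_insert]; omega] at hc
        rw [Finset.sum_insert (by simp only [Finset.mem_Icc]; omega)] at hc
        rw [Finset.sum_eq_zero (fun k hk => by
          simp only [Finset.mem_Icc] at hk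
          rw [ih k (by omega), zero_mul])] at hc
        rw [sub_self, chi_zero, mul_one, add_zero] at hc
        exact hc
  intro m
  rcases le_or_gt 0 m with h | h
  · exact key m.toNat m (by omega)
  · exact hneg m h

lemma Pfun_eq_zero {q d : ℕ} (hq : 2 ≤ q) (hgcd : Nat.gcd (2*q) d = 1)
    (x0 : ℤ) (x1 x2 : ℕ) (hx1 : x1 ≤ 1) (hx2 : x2 ≤ q - 1)
    (hx02 : ¬((x0 = 0 ∨ x0 = 1) ∧ (x2 = 0 ∨ x2 = 1))) :
    Pfun q d (bracket q d x0 x1 x2) = 0 := by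
  have key : ∀ e0 e1 e2 : ℕ, e0 ≤ 1 → e1 ≤ 1 → e2 ≤ 1 →
      bracket q d x0 x1 x2 = (e0:ℤ) * (2*(q:ℤ)) + (e1:ℤ) * (2*(q:ℤ)+(d:ℤ))
        + (e2:ℤ) * (2*(q:ℤ)+2*(d:ℤ)) → False := by
    intro e0 e1 e2 he0 he1 he2 h
    unfold bracket at h
    have hu := uniq hq hgcd x0 (e0:ℤ) x1 x2 e1 e2 hx1 hx2 he1 (by omega) h
    obtain ⟨h0, h1, h2⟩ := hu
    exact hx02 ⟨by omega, by omega⟩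
  have k0 : bracket q d x0 x1 x2 ≠ 0 :=
    fun h => key 0 0 0 (by omega) (by omega) (by omega) (by push_cast; linear_combination h)
  have k1 : bracket q d x0 x1 x2 ≠ 2*(q:ℤ) :=
    fun h => key 1 0 0 (by omega) (by omega) (by omega) (by push_cast; linear_combination h)
  have k2 : bracket q d x0 x1 x2 ≠ 2*(q:ℤ)+(d:ℤ) :=
    fun h => key 0 1 0 (by omega) (by omega) (by omega) (by push_cast; linear_combination h)
  have k3 : bracket q d x0 x1 x2 ≠ 2*(q:ℤ)+2*(d:ℤ) :=
    fun h => key 0 0 1 (by omega) (by omega) (by omega) (by push_cast; linear_combination h)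
  have k4 : bracket q d x0 x1 x2 ≠ 4*(q:ℤ)+(d:ℤ) :=
    fun h => key 1 1 0 (by omega) (by omega) (by omega) (by push_cast; linear_combination h)
  have k5 : bracket q d x0 x1 x2 ≠ 4*(q:ℤ)+2*(d:ℤ) :=
    fun h => key 1 0 1 (by omega) (by omega) (by omega) (by push_cast; linear_combination h)
  have k6 : bracket q d x0 x1 x2 ≠ 4*(q:ℤ)+3*(d:ℤ) :=
    fun h => key 0 1 1 (by omega) (by omega) (by omega) (by push_cast; linear_combination h)
  have k7 : bracket q d x0 x1 x2 ≠ 6*(q:ℤ)+3*(d:ℤ) :=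
    fun h => key 1 1 1 (by omega) (by omega) (by omega) (by push_cast; linear_combination h)
  unfold Pfun
  simp only [dl]
  rw [if_neg k0, if_neg k1, if_neg k2, if_neg k3, if_neg k4, if_neg k5, if_neg k6, if_neg k7]
  ring
end MBaux

theorem mobius_bracket_recursion
    (q d : ℕ) (hq : 2 ≤ q) (hd : 1 ≤ d) (hgcd : Nat.gcd (2 * q) d = 1)
    (S : Set ℤ)
    (hS : S = {z : ℤ | ∃ c0 c1 c2 : ℕ,
      z = (c0 : ℤ) * (2 * (q : ℤ)) + (c1 : ℤ) * (2 * (q : ℤ) + d) +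
          (c2 : ℤ) * (2 * (q : ℤ) + 2 * d)})
    (x0 : ℤ) (x1 x2 : ℕ) (hx1 : x1 ≤ 1) (hx2 : x2 ≤ q - 1)
    (hx02 : ¬((x0 = 0 ∨ x0 = 1) ∧ (x2 = 0 ∨ x2 = 1))) :
    (x2 = 0 →
      mobiusRed S (bracket q d x0 x1 0) =
        mobiusRed S (bracket q d (x0 - ((q : ℤ) + d)) x1 0) +
        mobiusRed S (bracket q d (x0 - ((q : ℤ) + d) - 1) x1 (q - 1)) -
        mobiusRed S (bracket q d (x0 - 2 * ((q : ℤ) + d) - 1) x1 (q - 1))) ∧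
    (1 ≤ x2 →
      mobiusRed S (bracket q d x0 x1 x2) =
        mobiusRed S (bracket q d (x0 - ((q : ℤ) + d)) x1 x2) +
        mobiusRed S (bracket q d (x0 - 1) x1 (x2 - 1)) -
        mobiusRed S (bracket q d (x0 - ((q : ℤ) + d) - 1) x1 (x2 - 1))) := by
  have hS' : S = MBaux.Sset q d := hS
  subst hS'
  have hq1 : (1:ℕ) ≤ q := by omega
  have hcq : ((q - 1 : ℕ) : ℤ) = (q:ℤ) - 1 := by
    rw [Nat.cast_sub hq1]; push_cast; ring
  constructor
  · intro h20
    subst h20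
    have hrec := MBaux.mured_rec hq hd hgcd (bracket q d x0 x1 0)
    have hP := MBaux.Pfun_eq_zero hq hgcd x0 x1 0 hx1 (by omega) hx02
    have e1 : bracket q d (x0 - ((q:ℤ) + d)) x1 0
        = bracket q d x0 x1 0 - (q:ℤ)*(2*(q:ℤ)+2*(d:ℤ)) := by
      unfold bracket; push_cast; ring
    have e2 : bracket q d (x0 - ((q:ℤ) + d) - 1) x1 (q - 1)
        = bracket q d x0 x1 0 - (4*(q:ℤ)+2*(d:ℤ)) := by
      unfold bracket; rw [hcq]; push_cast; ring
    have e3 : bracket q d (x0 - 2*((q:ℤ) + d) - 1) x1 (q - 1)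
        = bracket q d x0 x1 0 - ((q:ℤ)*(2*(q:ℤ)+2*(d:ℤ)) + (4*(q:ℤ)+2*(d:ℤ))) := by
      unfold bracket; rw [hcq]; push_cast; ring
    rw [e1, e2, e3]
    rw [hP] at hrec
    linarith
  · intro h21
    have hrec := MBaux.mured_rec hq hd hgcd (bracket q d x0 x1 x2)
    have hP := MBaux.Pfun_eq_zero hq hgcd x0 x1 x2 hx1 hx2 hx02
    have hcx : ((x2 - 1 : ℕ) : ℤ) = (x2:ℤ) - 1 := by
      rw [Nat.cast_sub h21]; push_cast; ring
    have e1 : bracket q d (x0 - ((q:ℤ) + d)) x1 x2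
        = bracket q d x0 x1 x2 - (q:ℤ)*(2*(q:ℤ)+2*(d:ℤ)) := by
      unfold bracket; push_cast; ring
    have e2 : bracket q d (x0 - 1) x1 (x2 - 1)
        = bracket q d x0 x1 x2 - (4*(q:ℤ)+2*(d:ℤ)) := by
      unfold bracket; rw [hcx]; push_cast; ring
    have e3 : bracket q d (x0 - ((q:ℤ) + d) - 1) x1 (x2 - 1)
        = bracket q d x0 x1 x2 - ((q:ℤ)*(2*(q:ℤ)+2*(d:ℤ)) + (4*(q:ℤ)+2*(d:ℤ))) := by
      unfold bracket; rw [hcx]; push_cast; ring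
    rw [e1, e2, e3]
    rw [hP] at hrec
    linarith
end

section
/- Let q ≥ 2 and d ≥ 1 be integers with gcd(2q, d) = 1, and let i ∈ {−1, 0, 1}. Then for every integer x, the multiplicity functions of the multisets B_i = { m(q+d) − n d + i : m ∈ ℕ, m ≥ 2, n ∈ {1, …, ⌊m/2⌋} } and C_i = A_i ∪ B_i (multiset union, where A_i = { m(q+d) + i : m ∈ ℕ }) satisfy 𝔪_{B_i}(x) = 𝔪_{C_i}(x − (2q+d)). -/
/-- The multiplicity function of the multiset `A_i = { m(q+d) + i : m ∈ ℕ }`: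
`multA q d i x` is the number of `m ∈ ℕ` with `x = m(q+d) + i`. -/
noncomputable def multA (q d : ℕ) (i : ℤ) (x : ℤ) : ℕ :=
  {m : ℕ | x = (m : ℤ) * ((q : ℤ) + d) + i}.ncard

/-- The multiplicity function of the multiset
`B_i = { m(q+d) - nd + i : m ∈ ℕ, m ≥ 2, 1 ≤ n ≤ ⌊m/2⌋ }`:
`multB q d i x` is the number of pairs `(m, n)` with `m ≥ 2`, `1 ≤ n ≤ ⌊m/2⌋` and
`x = m(q+d) - nd + i`. -/
noncomputable def multB (q d : ℕ) (i : ℤ) (x : ℤ) : ℕ :=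
  {p : ℕ × ℕ | 2 ≤ p.1 ∧ 1 ≤ p.2 ∧ p.2 ≤ p.1 / 2 ∧
    x = (p.1 : ℤ) * ((q : ℤ) + d) - (p.2 : ℤ) * d + i}.ncard

/-- The multiplicity function of the multiset union `C_i = A_i ∪ B_i`. -/
noncomputable def multC (q d : ℕ) (i : ℤ) (x : ℤ) : ℕ :=
  multA q d i x + multB q d i x

lemma setA_finite (q d : ℕ) (hq : 1 ≤ q) (i x : ℤ) :
    {m : ℕ | x = (m : ℤ) * ((q : ℤ) + d) + i}.Finite := by
  apply Set.Subsingleton.finite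
  intro a ha b hb
  simp only [Set.mem_setOf_eq] at ha hb
  have hs : (0:ℤ) < (q:ℤ) + d := by positivity
  have : (a:ℤ) * ((q:ℤ) + d) = (b:ℤ) * ((q:ℤ) + d) := by linarith
  have := mul_right_cancel₀ (ne_of_gt hs) this
  exact_mod_cast this

lemma setB_finite (q d : ℕ) (hq : 1 ≤ q) (i : ℤ) (hi : i ∈ ({-1, 0, 1} : Set ℤ)) (x : ℤ) :
    {p : ℕ × ℕ | 2 ≤ p.1 ∧ 1 ≤ p.2 ∧ p.2 ≤ p.1 / 2 ∧
      x = (p.1 : ℤ) * ((q : ℤ) + d) - (p.2 : ℤ) * d + i}.Finite := by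
  have hi' : -1 ≤ i := by
    simp only [Set.mem_insert_iff, Set.mem_singleton_iff] at hi
    rcases hi with h | h | h <;> omega
  apply Set.Finite.subset (Set.finite_Iic ((2*x + 2).toNat, (2*x + 2).toNat))
  rintro ⟨m, n⟩ ⟨hm, hn, hnm, hx⟩
  simp only [Set.mem_setOf_eq] at *
  have h2n : 2 * (n:ℤ) ≤ (m:ℤ) := by exact_mod_cast Nat.le_of_lt_succ (by omega)
  have hdpos : (0:ℤ) ≤ (d:ℤ) := by positivity
  have hq1 : (1:ℤ) ≤ (q:ℤ) := by exact_mod_cast hq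
  have key : (m:ℤ) ≤ 2 * x + 2 := by nlinarith
  have key2 : (n:ℤ) ≤ 2 * x + 2 := by linarith
  constructor
  · have : (m:ℤ) ≤ ((2*x+2).toNat : ℤ) := le_trans key (Int.self_le_toNat _)
    exact_mod_cast this
  · have : (n:ℤ) ≤ ((2*x+2).toNat : ℤ) := le_trans key2 (Int.self_le_toNat _)
    exact_mod_cast this

theorem multB_eq_multC_shift (q d : ℕ) (hq : 2 ≤ q) (hd : 1 ≤ d)
    (hgcd : Nat.gcd (2 * q) d = 1)
    (i : ℤ) (hi : i ∈ ({-1, 0, 1} : Set ℤ)) (x : ℤ) :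
    multB q d i x = multC q d i (x - (2 * (q : ℤ) + d)) := by
  set y : ℤ := x - (2 * (q:ℤ) + d) with hy
  have hq1 : (1:ℕ) ≤ q := by omega
  set SA : Set ℕ := {m : ℕ | y = (m : ℤ) * ((q : ℤ) + d) + i} with hSA
  set SB : Set (ℕ × ℕ) := {p : ℕ × ℕ | 2 ≤ p.1 ∧ 1 ≤ p.2 ∧ p.2 ≤ p.1 / 2 ∧
      y = (p.1 : ℤ) * ((q : ℤ) + d) - (p.2 : ℤ) * d + i} with hSB
  have hsplit : {p : ℕ × ℕ | 2 ≤ p.1 ∧ 1 ≤ p.2 ∧ p.2 ≤ p.1 / 2 ∧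
      x = (p.1 : ℤ) * ((q : ℤ) + d) - (p.2 : ℤ) * d + i}
      = ((fun m => (m + 2, 1)) '' SA) ∪ ((fun p : ℕ × ℕ => (p.1 + 2, p.2 + 1)) '' SB) := by
    ext ⟨m, n⟩
    simp only [Set.mem_setOf_eq, Set.mem_union, Set.mem_image, Prod.mk.injEq, hSA, hSB]
    constructor
    · rintro ⟨hm, hn, hnm, hx⟩
      rcases eq_or_lt_of_le hn with h1 | h2
      · left
        refine ⟨m - 2, ?_, by omega, by omega⟩
        have hc : ((m - 2 : ℕ) : ℤ) = (m:ℤ) - 2 := by push_cast [Nat.cast_sub hm]; ring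
        rw [hc, hy]
        have hn1 : (n:ℤ) = 1 := by exact_mod_cast h1.symm
        rw [hn1] at hx
        linarith [hx]
      · right
        refine ⟨(m - 2, n - 1), ⟨by omega, by omega, by omega, ?_⟩, by omega, by omega⟩
        have hm4 : 4 ≤ m := by omega
        have hc1 : ((m - 2 : ℕ) : ℤ) = (m:ℤ) - 2 := by push_cast [Nat.cast_sub hm]; ring
        have hc2 : ((n - 1 : ℕ) : ℤ) = (n:ℤ) - 1 := by
          have : 1 ≤ n := hn
          push_cast [Nat.cast_sub this]; ring
        rw [hc1, hc2, hy]
        nlinarith [hx]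
    · rintro (⟨a, ha, ham, han⟩ | ⟨⟨a, b⟩, ⟨ha2, hb1, hba, hab⟩, ham, han⟩)
      · subst ham han
        rw [hy] at ha
        refine ⟨by omega, le_refl 1, by omega, ?_⟩
        push_cast
        push_cast at ha
        linarith [ha]
      · subst ham han
        rw [hy] at hab
        refine ⟨by omega, by omega, by omega, ?_⟩
        push_cast
        push_cast at hab
        linarith [hab]
  have hinjA : Function.Injective (fun m : ℕ => (m + 2, 1)) := by
    intro a b h; simpa using h
  have hinjB : Function.Injective (fun p : ℕ × ℕ => (p.1 + 2, p.2 + 1)) := by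
    intro ⟨a, b⟩ ⟨c, e⟩ h
    simp only [Prod.mk.injEq] at h ⊢
    omega
  have hfinA : SA.Finite := setA_finite q d hq1 i y
  have hfinB : SB.Finite := setB_finite q d hq1 i hi y
  have hdisj : Disjoint ((fun m => (m + 2, 1)) '' SA)
      ((fun p : ℕ × ℕ => (p.1 + 2, p.2 + 1)) '' SB) := by
    rw [Set.disjoint_left]
    rintro ⟨m, n⟩ ⟨a, _, ha⟩ ⟨⟨c, e⟩, ⟨_, he, _, _⟩, hc⟩
    simp only [Prod.mk.injEq] at ha hc
    omega
  rw [multB, multC, hsplit, Set.ncard_union_eq hdisj (hfinA.image _) (hfinB.image _),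
    Set.ncard_image_of_injective _ hinjA, Set.ncard_image_of_injective _ hinjB]
  rfl
end

section
/- Let q ≥ 2 and d ≥ 1 be integers with gcd(2q, d) = 1, let a = 2q and S = ⟨a, a+d, a+2d⟩, and for (x_0, x_1, x_2) ∈ ℤ × {0,1} × {0, …, q−1} write [x_0, x_1, x_2] = x_0·a + x_1·(a+d) + x_2·(a+2d). Then for every (x_0, x_1, x_2) ∈ ℤ × {0,1} × {0, …, q−1}: if x_2 = 0 then μ_S([x_0, x_1, 0]) = (−1)^{x_1} · ( 𝔪_{A_0}(x_0) − 𝔪_{A_1}(x_0) + 2𝔪_{B_0}(x_0) − 𝔪_{B_{−1}}(x_0) − 𝔪_{B_1}(x_0) ), and if x_2 ≥ 1 then μ_S([x_0, x_1, x_2]) = (−1)^{x_1} · ( 2𝔪_{C_0}(x_0 − x_2) − 𝔪_{C_{−1}}(x_0 − x_2) − 𝔪_{C_1}(x_0 − x_2) ). -/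
/-! ### Auxiliary counting machinery -/

namespace MECaux

/-- Generic splitting of a finite count along a predicate whose complement is the
image of an injection. -/
lemma ncard_split {α : Type*} (T : Set α) (hT : T.Finite) (P : α → Prop) (σ : α → α)
    (hσ : Function.Injective σ)
    (him : ∀ a ∈ T, (¬ P a ↔ ∃ b, σ b = a)) :
    T.ncard = {a ∈ T | P a}.ncard + {b | σ b ∈ T}.ncard := by
  have h2 : {a ∈ T | ¬ P a} = σ '' {b | σ b ∈ T} := by
    ext a
    constructor
    · rintro ⟨haT, hnP⟩
      obtain ⟨b, rfl⟩ := (him a haT).1 hnP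
      exact ⟨b, haT, rfl⟩
    · rintro ⟨b, hb, rfl⟩
      exact ⟨hb, (him _ hb).2 ⟨b, rfl⟩⟩
  have h1 : T = {a ∈ T | P a} ∪ {a ∈ T | ¬ P a} := by
    ext a; by_cases h : P a <;> simp [h]
  have hd : Disjoint {a ∈ T | P a} {a ∈ T | ¬ P a} := by
    rw [Set.disjoint_left]; rintro a ⟨-, h⟩ ⟨-, h'⟩; exact h' h
  conv_lhs => rw [h1]
  rw [Set.ncard_union_eq hd (hT.subset (by intro a ha; exact ha.1))
    (hT.subset (by intro a ha; exact ha.1)), h2, Set.ncard_image_of_injective _ hσ]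

lemma ncard_eq_of_image {α β : Type*} {s : Set β} {t : Set α} (f : α → β)
    (hf : Function.Injective f) (hst : s = f '' t) : s.ncard = t.ncard := by
  rw [hst, Set.ncard_image_of_injective _ hf]

lemma finite_pair {P : ℕ × ℕ → Prop} (N : ℕ) (h : ∀ p, P p → p.1 ≤ N ∧ p.2 ≤ N) :
    {p : ℕ × ℕ | P p}.Finite := by
  apply Set.Finite.subset ((Set.finite_Iic N).prod (Set.finite_Iic N))
  intro p hp
  exact ⟨(h p hp).1, (h p hp).2⟩

lemma finite_triple {P : ℕ × ℕ × ℕ → Prop} (N : ℕ)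
    (h : ∀ p, P p → p.1 ≤ N ∧ p.2.1 ≤ N ∧ p.2.2 ≤ N) :
    {p : ℕ × ℕ × ℕ | P p}.Finite := by
  apply Set.Finite.subset ((Set.finite_Iic N).prod ((Set.finite_Iic N).prod (Set.finite_Iic N)))
  intro p hp
  exact ⟨(h p hp).1, (h p hp).2.1, (h p hp).2.2⟩

lemma finite_nat {P : ℕ → Prop} (N : ℕ) (h : ∀ p, P p → p ≤ N) :
    {p : ℕ | P p}.Finite :=
  Set.Finite.subset (Set.finite_Iic N) h

/-- Vanishing by downward stepping. -/
lemma vanish_of_step (u : ℤ → ℤ) (s : ℤ) (hs : 1 ≤ s) (h0 : ∀ x : ℤ, x < 0 → u x = 0)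
    (hstep : ∀ x : ℤ, u x = u (x - s)) : ∀ x : ℤ, u x = 0 := by
  have H : ∀ n : ℕ, ∀ x : ℤ, x ≤ (n : ℤ) → u x = 0 := by
    intro n
    induction n with
    | zero =>
      intro x hx
      rcases lt_or_eq_of_le hx with h | h
      · exact h0 x (by omega)
      · rw [h, hstep]; exact h0 _ (by omega)
    | succ n ih =>
      intro x hx
      by_cases h : x < 0
      · exact h0 x h
      · rw [hstep]; exact ih _ (by omega)
  intro x
  by_cases h : x < 0
  · exact h0 x h
  · exact H x.toNat x (by omega)

end MECaux
namespace MECaux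

/-! ### The counting functions -/

/-- Denumerant: number of representations. -/
noncomputable def dN (q d : ℕ) (x : ℤ) : ℕ :=
  {c : ℕ × ℕ × ℕ | x = (c.1 : ℤ) * (2*(q:ℤ)) + (c.2.1 : ℤ) * (2*(q:ℤ)+(d:ℤ))
      + (c.2.2 : ℤ) * (2*(q:ℤ)+2*(d:ℤ))}.ncard

/-- Representations with middle coordinate at most 1. -/
noncomputable def dA (q d : ℕ) (x : ℤ) : ℕ :=
  {c : ℕ × ℕ × ℕ | (c.2.1 ≤ 1) ∧ x = (c.1 : ℤ) * (2*(q:ℤ)) + (c.2.1 : ℤ) * (2*(q:ℤ)+(d:ℤ))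
      + (c.2.2 : ℤ) * (2*(q:ℤ)+2*(d:ℤ))}.ncard

/-- Normal-form representations. -/
noncomputable def dF (q d : ℕ) (x : ℤ) : ℕ :=
  {c : ℕ × ℕ × ℕ | (c.2.1 ≤ 1) ∧ (c.2.2 < q) ∧ x = (c.1 : ℤ) * (2*(q:ℤ))
      + (c.2.1 : ℤ) * (2*(q:ℤ)+(d:ℤ)) + (c.2.2 : ℤ) * (2*(q:ℤ)+2*(d:ℤ))}.ncard

noncomputable def dN2 (q d : ℕ) (x : ℤ) : ℕ :=
  {c : ℕ × ℕ | x = (c.1 : ℤ) * (2*(q:ℤ)+(d:ℤ)) + (c.2 : ℤ) * (2*(q:ℤ)+2*(d:ℤ))}.ncard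

noncomputable def dN1 (q d : ℕ) (x : ℤ) : ℕ :=
  {c : ℕ | x = (c : ℤ) * (2*(q:ℤ)+2*(d:ℤ))}.ncard

/-- Count of `(k,l)` with `x = k·2(2q+d) + l·2q(q+d)`. -/
noncomputable def hcnt (q d : ℕ) (x : ℤ) : ℕ :=
  {p : ℕ × ℕ | x = (p.1 : ℤ) * (2*(2*(q:ℤ)+(d:ℤ))) + (p.2 : ℤ) * (2*(q:ℤ)*((q:ℤ)+(d:ℤ)))}.ncard

noncomputable def Ncnt (q d : ℕ) (S : Set ℤ) (x : ℤ) : ℕ :=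
  {p : ℕ × ℕ | x - (p.1 : ℤ) * (2*(2*(q:ℤ)+(d:ℤ))) - (p.2 : ℤ) * (2*(q:ℤ)*((q:ℤ)+(d:ℤ))) ∈ S}.ncard

noncomputable def Mcnt (q d : ℕ) (S : Set ℤ) (x : ℤ) : ℕ :=
  {l : ℕ | x - (l : ℤ) * (2*(q:ℤ)*((q:ℤ)+(d:ℤ))) ∈ S}.ncard

/-- Count of `(k,l)` with `x = k(2q+d) + l·q(q+d)` (halved version of `hcnt`). -/
noncomputable def h2 (q d : ℕ) (x : ℤ) : ℕ :=
  {p : ℕ × ℕ | x = (p.1 : ℤ) * (2*(q:ℤ)+(d:ℤ)) + (p.2 : ℤ) * ((q:ℤ)*((q:ℤ)+(d:ℤ)))}.ncard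

/-- Count of `(s,l)` with `x = s(2q+d) + l(q+d)`. -/
noncomputable def slA (q d : ℕ) (x : ℤ) : ℕ :=
  {p : ℕ × ℕ | x = (p.1 : ℤ) * (2*(q:ℤ)+(d:ℤ)) + (p.2 : ℤ) * ((q:ℤ)+(d:ℤ))}.ncard

/-- Same with `s ≥ 1`. -/
noncomputable def slB (q d : ℕ) (x : ℤ) : ℕ :=
  {p : ℕ × ℕ | 1 ≤ p.1 ∧ x = (p.1 : ℤ) * (2*(q:ℤ)+(d:ℤ)) + (p.2 : ℤ) * ((q:ℤ)+(d:ℤ))}.ncard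

/-- The candidate Möbius function. -/
noncomputable def fF (q d : ℕ) (n : ℤ) : ℤ :=
  (hcnt q d n : ℤ) - hcnt q d (n - 2*q) - hcnt q d (n - (2*q+d)) - hcnt q d (n - (2*q+2*d))
    + hcnt q d (n - (4*q+d)) + hcnt q d (n - (4*q+2*d)) + hcnt q d (n - (4*q+3*d))
    - hcnt q d (n - (6*q+3*d))

/-! ### Finiteness -/

lemma finite_sol3 {g0 g1 g2 : ℤ} (x : ℤ) (h0 : 1 ≤ g0) (h1 : 1 ≤ g1) (h2 : 1 ≤ g2) :
    {c : ℕ × ℕ × ℕ | x = (c.1 : ℤ) * g0 + (c.2.1 : ℤ) * g1 + (c.2.2 : ℤ) * g2}.Finite := by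
  apply finite_triple x.toNat
  rintro ⟨a, b, c⟩ hp
  simp only [Set.mem_setOf_eq] at hp
  have ha : (a : ℤ) ≤ x := by nlinarith [Int.ofNat_nonneg a, Int.ofNat_nonneg b, Int.ofNat_nonneg c]
  have hb : (b : ℤ) ≤ x := by nlinarith [Int.ofNat_nonneg a, Int.ofNat_nonneg b, Int.ofNat_nonneg c]
  have hc : (c : ℤ) ≤ x := by nlinarith [Int.ofNat_nonneg a, Int.ofNat_nonneg b, Int.ofNat_nonneg c]
  exact ⟨show a ≤ x.toNat by omega, show b ≤ x.toNat by omega, show c ≤ x.toNat by omega⟩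

lemma finite_sol2 {g0 g1 : ℤ} (x : ℤ) (h0 : 1 ≤ g0) (h1 : 1 ≤ g1) :
    {c : ℕ × ℕ | x = (c.1 : ℤ) * g0 + (c.2 : ℤ) * g1}.Finite := by
  apply finite_pair x.toNat
  rintro ⟨a, b⟩ hp
  simp only [Set.mem_setOf_eq] at hp
  have ha : (a : ℤ) ≤ x := by nlinarith [Int.ofNat_nonneg a, Int.ofNat_nonneg b]
  have hb : (b : ℤ) ≤ x := by nlinarith [Int.ofNat_nonneg a, Int.ofNat_nonneg b]
  exact ⟨show a ≤ x.toNat by omega, show b ≤ x.toNat by omega⟩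

lemma finite_sol1 {g0 : ℤ} (x : ℤ) (h0 : 1 ≤ g0) :
    {c : ℕ | x = (c : ℤ) * g0}.Finite := by
  apply finite_nat x.toNat
  intro a hp
  have ha : (a : ℤ) ≤ x := by nlinarith [Int.ofNat_nonneg a]
  omega

/-! ### Membership in `S` -/

section Smem

variable {q d : ℕ} {S : Set ℤ}

lemma memS_iff (hS : S = {z : ℤ | ∃ c0 c1 c2 : ℕ,
      z = (c0 : ℤ) * (2 * (q : ℤ)) + (c1 : ℤ) * (2 * (q : ℤ) + d) +
          (c2 : ℤ) * (2 * (q : ℤ) + 2 * d)}) (z : ℤ) :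
    z ∈ S ↔ ∃ m j : ℕ, j ≤ 2 * m ∧ z = (m : ℤ) * (2*(q:ℤ)) + (j : ℤ) * d := by
  subst hS
  simp only [Set.mem_setOf_eq]
  constructor
  · rintro ⟨c0, c1, c2, rfl⟩
    exact ⟨c0 + c1 + c2, c1 + 2 * c2, by omega, by push_cast; ring⟩
  · rintro ⟨m, j, hj, rfl⟩
    refine ⟨m - j/2 - j % 2, j % 2, j / 2, ?_⟩
    have h1 : ((m - j/2 - j % 2 : ℕ) : ℤ) = (m : ℤ) - (j/2 : ℕ) - (j % 2 : ℕ) := by omega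
    have h2 : (j : ℤ) = 2 * ((j/2 : ℕ) : ℤ) + ((j % 2 : ℕ) : ℤ) := by omega
    rw [h1]
    linear_combination (d : ℤ) * h2

lemma S_nonneg (hS : S = {z : ℤ | ∃ c0 c1 c2 : ℕ,
      z = (c0 : ℤ) * (2 * (q : ℤ)) + (c1 : ℤ) * (2 * (q : ℤ) + d) +
          (c2 : ℤ) * (2 * (q : ℤ) + 2 * d)}) {z : ℤ} (hz : z ∈ S) : 0 ≤ z := by
  rw [memS_iff hS] at hz
  obtain ⟨m, j, hj, rfl⟩ := hz
  positivity

lemma zero_memS (hS : S = {z : ℤ | ∃ c0 c1 c2 : ℕ,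
      z = (c0 : ℤ) * (2 * (q : ℤ)) + (c1 : ℤ) * (2 * (q : ℤ) + d) +
          (c2 : ℤ) * (2 * (q : ℤ) + 2 * d)}) : (0 : ℤ) ∈ S := by
  rw [memS_iff hS]
  exact ⟨0, 0, le_refl _, by push_cast; ring⟩

lemma S_add (hS : S = {z : ℤ | ∃ c0 c1 c2 : ℕ,
      z = (c0 : ℤ) * (2 * (q : ℤ)) + (c1 : ℤ) * (2 * (q : ℤ) + d) +
          (c2 : ℤ) * (2 * (q : ℤ) + 2 * d)}) {y z : ℤ} (hy : y ∈ S) (hz : z ∈ S) :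
    y + z ∈ S := by
  rw [memS_iff hS] at hy hz ⊢
  obtain ⟨m, j, hj, rfl⟩ := hy
  obtain ⟨m', j', hj', rfl⟩ := hz
  exact ⟨m + m', j + j', by omega, by push_cast; ring⟩

end Smem

end MECaux
namespace MECaux

/-! ### Coordinate splitting helpers -/

lemma ncard_split_fst {α : Type*} (T : Set (ℕ × α)) (hT : T.Finite) (t : ℕ) (ht : 1 ≤ t) :
    T.ncard = {a ∈ T | a.1 < t}.ncard + {b : ℕ × α | (b.1 + t, b.2) ∈ T}.ncard := by
  apply ncard_split T hT _ (fun b : ℕ × α => (b.1 + t, b.2))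
  · rintro ⟨a, x⟩ ⟨b, y⟩ h
    rw [Prod.mk.injEq] at h ⊢
    exact ⟨by omega, h.2⟩
  · rintro ⟨a, x⟩ _
    dsimp only
    constructor
    · intro h
      refine ⟨(a - t, x), ?_⟩
      dsimp only
      rw [show a - t + t = a by omega]
    · rintro ⟨⟨b, y⟩, hb⟩
      rw [Prod.mk.injEq] at hb
      obtain ⟨hb1, -⟩ := hb
      omega

lemma ncard_split_mid {α : Type*} (T : Set (ℕ × ℕ × α)) (hT : T.Finite) (t : ℕ) (ht : 1 ≤ t) :
    T.ncard = {a ∈ T | a.2.1 < t}.ncard + {b : ℕ × ℕ × α | (b.1, b.2.1 + t, b.2.2) ∈ T}.ncard := by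
  apply ncard_split T hT _ (fun b : ℕ × ℕ × α => (b.1, b.2.1 + t, b.2.2))
  · rintro ⟨a, b, x⟩ ⟨a', b', y⟩ h
    simp only [Prod.mk.injEq] at h ⊢
    obtain ⟨h1, h2, h3⟩ := h
    exact ⟨h1, by omega, h3⟩
  · rintro ⟨a, b, x⟩ _
    change ¬ b < t ↔ ∃ p : ℕ × ℕ × α, (p.1, p.2.1 + t, p.2.2) = (a, b, x)
    constructor
    · intro h
      exact ⟨(a, b - t, x), by rw [show b - t + t = b from by omega]⟩
    · rintro ⟨⟨a', b', y⟩, hb⟩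
      rw [Prod.mk.injEq, Prod.mk.injEq] at hb
      obtain ⟨-, hb2, -⟩ := hb
      omega

lemma ncard_split_third {α β : Type*} (T : Set (α × β × ℕ)) (hT : T.Finite) (t : ℕ) (ht : 1 ≤ t) :
    T.ncard = {a ∈ T | a.2.2 < t}.ncard + {b : α × β × ℕ | (b.1, b.2.1, b.2.2 + t) ∈ T}.ncard := by
  apply ncard_split T hT _ (fun b : α × β × ℕ => (b.1, b.2.1, b.2.2 + t))
  · rintro ⟨a, b, x⟩ ⟨a', b', y⟩ h
    simp only [Prod.mk.injEq] at h ⊢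
    obtain ⟨h1, h2, h3⟩ := h
    exact ⟨h1, h2, by omega⟩
  · rintro ⟨a, b, x⟩ _
    change ¬ x < t ↔ ∃ p : α × β × ℕ, (p.1, p.2.1, p.2.2 + t) = (a, b, x)
    constructor
    · intro h
      exact ⟨(a, b, x - t), by rw [show x - t + t = x from by omega]⟩
    · rintro ⟨⟨a', b', y⟩, hb⟩
      rw [Prod.mk.injEq, Prod.mk.injEq] at hb
      obtain ⟨-, -, hb3⟩ := hb
      omega

lemma ncard_split_nat (T : Set ℕ) (hT : T.Finite) (t : ℕ) (ht : 1 ≤ t) :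
    T.ncard = {a ∈ T | a < t}.ncard + {b : ℕ | b + t ∈ T}.ncard := by
  apply ncard_split T hT _ (fun b : ℕ => b + t)
  · intro a b h
    dsimp only at h
    omega
  · intro a _
    change ¬ a < t ↔ ∃ b : ℕ, b + t = a
    constructor
    · intro h
      exact ⟨a - t, by omega⟩
    · rintro ⟨b, hb⟩
      omega

/-! ### Recurrences -/

private lemma hg0' {q : ℕ} (hq : 1 ≤ q) : (1:ℤ) ≤ 2*(q:ℤ) := by
  have : (1:ℤ) ≤ q := by exact_mod_cast hq
  linarith

private lemma hg1' {q d : ℕ} (hq : 1 ≤ q) (hd : 1 ≤ d) : (1:ℤ) ≤ 2*(q:ℤ)+(d:ℤ) := by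
  have : (1:ℤ) ≤ q := by exact_mod_cast hq
  have : (0:ℤ) ≤ d := Int.ofNat_nonneg d
  linarith

private lemma hg2' {q d : ℕ} (hq : 1 ≤ q) (hd : 1 ≤ d) : (1:ℤ) ≤ 2*(q:ℤ)+2*(d:ℤ) := by
  have : (1:ℤ) ≤ q := by exact_mod_cast hq
  have : (0:ℤ) ≤ d := Int.ofNat_nonneg d
  linarith

private lemma hB' {q d : ℕ} (hq : 1 ≤ q) (hd : 1 ≤ d) : (1:ℤ) ≤ 2*(q:ℤ)*((q:ℤ)+(d:ℤ)) := by
  have h1 : (1:ℤ) ≤ q := by exact_mod_cast hq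
  have h2 : (1:ℤ) ≤ d := by exact_mod_cast hd
  nlinarith

lemma dN_finite {q d : ℕ} (hq : 1 ≤ q) (hd : 1 ≤ d) (x : ℤ) :
    {c : ℕ × ℕ × ℕ | x = (c.1 : ℤ) * (2*(q:ℤ))
    + (c.2.1 : ℤ) * (2*(q:ℤ)+(d:ℤ)) + (c.2.2 : ℤ) * (2*(q:ℤ)+2*(d:ℤ))}.Finite :=
  finite_sol3 x (hg0' hq) (hg1' hq hd) (hg2' hq hd)

lemma dN_rec0 {q d : ℕ} (hq : 1 ≤ q) (hd : 1 ≤ d) (x : ℤ) :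
    dN q d x = dN2 q d x + dN q d (x - 2*(q:ℤ)) := by
  rw [dN, ncard_split_fst _ (dN_finite hq hd x) 1 le_rfl]
  congr 1
  · apply ncard_eq_of_image (fun p : ℕ × ℕ => ((0:ℕ), p))
    · rintro ⟨a, b⟩ ⟨a', b'⟩ h
      simpa using h
    · ext ⟨a, b, c⟩
      simp only [Set.mem_setOf_eq, Set.mem_image, Prod.mk.injEq]
      constructor
      · rintro ⟨hx, ha⟩
        have ha0 : a = 0 := by omega
        subst ha0
        refine ⟨(b, c), ?_, rfl, rfl⟩
        push_cast at hx ⊢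
        linarith
      · rintro ⟨⟨b', c'⟩, hx, h0, hbc⟩
        obtain ⟨hb, hc⟩ := Prod.mk.injEq .. ▸ hbc
        subst h0
        constructor
        · push_cast at hx ⊢
          rw [← hb, ← hc] at *
          linarith
        · omega
  · apply congrArg Set.ncard
    ext ⟨a, b, c⟩
    simp only [Set.mem_setOf_eq]
    push_cast
    constructor <;> intro h <;> linarith

lemma dN2_finite {q d : ℕ} (hq : 1 ≤ q) (hd : 1 ≤ d) (x : ℤ) :
    {c : ℕ × ℕ | x = (c.1 : ℤ) * (2*(q:ℤ)+(d:ℤ))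
    + (c.2 : ℤ) * (2*(q:ℤ)+2*(d:ℤ))}.Finite :=
  finite_sol2 x (hg1' hq hd) (hg2' hq hd)

lemma dN2_rec {q d : ℕ} (hq : 1 ≤ q) (hd : 1 ≤ d) (x : ℤ) :
    dN2 q d x = dN1 q d x + dN2 q d (x - (2*(q:ℤ)+(d:ℤ))) := by
  rw [dN2, ncard_split_fst _ (dN2_finite hq hd x) 1 le_rfl]
  congr 1
  · apply ncard_eq_of_image (fun p : ℕ => ((0:ℕ), p))
    · intro a b h
      simpa using h
    · ext ⟨a, b⟩
      simp only [Set.mem_setOf_eq, Set.mem_image, Prod.mk.injEq]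
      constructor
      · rintro ⟨hx, ha⟩
        have ha0 : a = 0 := by omega
        subst ha0
        refine ⟨b, ?_, rfl, rfl⟩
        push_cast at hx ⊢
        linarith
      · rintro ⟨b', hx, h0, hb⟩
        subst h0
        subst hb
        constructor
        · push_cast at hx ⊢
          linarith
        · omega
  · apply congrArg Set.ncard
    ext ⟨a, b⟩
    simp only [Set.mem_setOf_eq]
    push_cast
    constructor <;> intro h <;> linarith

lemma dN1_finite {q d : ℕ} (hq : 1 ≤ q) (hd : 1 ≤ d) (x : ℤ) :
    {c : ℕ | x = (c : ℤ) * (2*(q:ℤ)+2*(d:ℤ))}.Finite :=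
  finite_sol1 x (hg2' hq hd)

lemma dN1_rec {q d : ℕ} (hq : 1 ≤ q) (hd : 1 ≤ d) (x : ℤ) :
    (dN1 q d x : ℤ) = (if x = 0 then 1 else 0) + dN1 q d (x - (2*(q:ℤ)+2*(d:ℤ))) := by
  rw [dN1, ncard_split_nat _ (dN1_finite hq hd x) 1 le_rfl]
  push_cast
  have h2 : {b : ℕ | b + 1 ∈ {c : ℕ | x = (c : ℤ) * (2*(q:ℤ)+2*(d:ℤ))}}.ncard
      = dN1 q d (x - (2*(q:ℤ)+2*(d:ℤ))) := by
    apply congrArg Set.ncard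
    ext a
    simp only [Set.mem_setOf_eq]
    push_cast
    constructor <;> intro h <;> linarith
  rw [h2]
  congr 1
  by_cases hx : x = 0
  · subst hx
    have : {a ∈ {c : ℕ | (0:ℤ) = (c : ℤ) * (2*(q:ℤ)+2*(d:ℤ))} | a < 1} = {0} := by
      ext a
      simp only [Set.mem_setOf_eq, Set.mem_singleton_iff]
      constructor
      · rintro ⟨-, h⟩; omega
      · rintro rfl
        refine ⟨by push_cast; ring, by omega⟩
    rw [this]
    simp
  · have : {a ∈ {c : ℕ | x = (c : ℤ) * (2*(q:ℤ)+2*(d:ℤ))} | a < 1} = ∅ := by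
      ext a
      simp only [Set.mem_setOf_eq, Set.mem_empty_iff_false, iff_false, not_and]
      intro h hlt
      have ha0 : a = 0 := by omega
      subst ha0
      simp at h
      exact hx h
    rw [this]
    simp [hx]

lemma dN_rec1 {q d : ℕ} (hq : 1 ≤ q) (hd : 1 ≤ d) (x : ℤ) :
    dN q d x = dA q d x + dN q d (x - (4*(q:ℤ)+2*(d:ℤ))) := by
  rw [dN, ncard_split_mid _ (dN_finite hq hd x) 2 (by omega)]
  congr 1
  · apply congrArg Set.ncard
    ext ⟨a, b, c⟩
    simp only [Set.mem_setOf_eq, dA]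
    constructor
    · rintro ⟨hx, hb⟩; exact ⟨by omega, hx⟩
    · rintro ⟨hb, hx⟩; exact ⟨hx, by omega⟩
  · apply congrArg Set.ncard
    ext ⟨a, b, c⟩
    simp only [Set.mem_setOf_eq]
    push_cast
    constructor <;> intro h <;> linarith

lemma dA_rec {q d : ℕ} (hq : 1 ≤ q) (hd : 1 ≤ d) (x : ℤ) :
    dA q d x = dF q d x + dA q d (x - (2*(q:ℤ)*((q:ℤ)+(d:ℤ)))) := by
  have hfin : {c : ℕ × ℕ × ℕ | (c.2.1 ≤ 1) ∧ x = (c.1 : ℤ) * (2*(q:ℤ))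
      + (c.2.1 : ℤ) * (2*(q:ℤ)+(d:ℤ)) + (c.2.2 : ℤ) * (2*(q:ℤ)+2*(d:ℤ))}.Finite :=
    (dN_finite hq hd x).subset (fun c hc => hc.2)
  rw [dA, ncard_split_third _ hfin q hq]
  congr 1
  · apply congrArg Set.ncard
    ext ⟨a, b, c⟩
    simp only [Set.mem_setOf_eq, dF]
    tauto
  · apply congrArg Set.ncard
    ext ⟨a, b, c⟩
    simp only [Set.mem_setOf_eq]
    push_cast
    constructor
    · rintro ⟨hb, hx⟩
      exact ⟨hb, by nlinarith⟩
    · rintro ⟨hb, hx⟩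
      exact ⟨hb, by nlinarith⟩

end MECaux
namespace MECaux

open Classical in
noncomputable def iS (S : Set ℤ) (x : ℤ) : ℤ := if x ∈ S then 1 else 0

def e0 (x : ℤ) : ℤ := if x = 0 then 1 else 0

section WithS

variable {q d : ℕ} {S : Set ℤ}

/-- abbreviation for the standing hypothesis -/
def SEq (q d : ℕ) (S : Set ℤ) : Prop :=
  S = {z : ℤ | ∃ c0 c1 c2 : ℕ,
      z = (c0 : ℤ) * (2 * (q : ℤ)) + (c1 : ℤ) * (2 * (q : ℤ) + d) +
          (c2 : ℤ) * (2 * (q : ℤ) + 2 * d)}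

lemma d_odd (hgcd : Nat.gcd (2 * q) d = 1) : d % 2 = 1 := by
  rcases Nat.even_or_odd d with he | ho
  · exfalso
    have h2 : 2 ∣ Nat.gcd (2 * q) d := Nat.dvd_gcd ⟨q, rfl⟩ he.two_dvd
    rw [hgcd] at h2
    norm_num at h2
  · obtain ⟨w, hw⟩ := ho
    omega

lemma coprime_qd (hgcd : Nat.gcd (2 * q) d = 1) : Nat.Coprime q d :=
  Nat.Coprime.coprime_dvd_left ⟨2, by ring⟩ hgcd

lemma isCoprime_qd (hgcd : Nat.gcd (2 * q) d = 1) : IsCoprime (q : ℤ) (d : ℤ) :=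
  Int.isCoprime_iff_gcd_eq_one.mpr (by
    rw [Int.gcd_natCast_natCast]
    exact coprime_qd hgcd)

lemma isCoprime_q_qd (hgcd : Nat.gcd (2 * q) d = 1) :
    IsCoprime (q : ℤ) ((q : ℤ) + (d : ℤ)) := by
  have h := (isCoprime_qd hgcd).add_mul_left_right 1
  rw [mul_one] at h
  rwa [add_comm] at h

/-- The normal form count equals the indicator of `S`. -/
lemma dF_eq_iS (hq : 2 ≤ q) (hd : 1 ≤ d) (hgcd : Nat.gcd (2 * q) d = 1)
    (hS : SEq q d S) (x : ℤ) : (dF q d x : ℤ) = iS S x := by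
  have hq0 : 0 < q := by omega
  by_cases hx : x ∈ S
  · rw [iS, if_pos hx]
    rw [memS_iff hS] at hx
    obtain ⟨m, j, hj, rfl⟩ := hx
    obtain ⟨t, r, hjtr, hr1⟩ : ∃ t r, j = 2*t + r ∧ r ≤ 1 := ⟨j/2, j%2, by omega, by omega⟩
    obtain ⟨k, c2, hkc, hc2q⟩ : ∃ k c2, t = q*k + c2 ∧ c2 < q :=
      ⟨t/q, t%q, (Nat.div_add_mod t q).symm, Nat.mod_lt _ hq0⟩
    obtain ⟨m', hm'⟩ : ∃ m', m = t + r + m' := ⟨m - t - r, by omega⟩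
    have H1 : (j : ℤ) = 2 * (t:ℤ) + (r:ℤ) := by exact_mod_cast congrArg (Nat.cast : ℕ → ℤ) hjtr
    have H2 : (t : ℤ) = (q:ℤ) * (k:ℤ) + (c2:ℤ) := by
      exact_mod_cast congrArg (Nat.cast : ℕ → ℤ) hkc
    have Hm : (m : ℤ) = (t:ℤ) + (r:ℤ) + (m':ℤ) := by
      exact_mod_cast congrArg (Nat.cast : ℕ → ℤ) hm'
    have Hc0 : ((m' + (q + d) * k : ℕ) : ℤ) = (m':ℤ) + ((q:ℤ)+(d:ℤ)) * (k:ℤ) := by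
      push_cast; ring
    have H3 : ((m' + (q + d) * k : ℕ) : ℤ)
        = (m:ℤ) - (t:ℤ) - (r:ℤ) + ((q:ℤ)+(d:ℤ)) * (k:ℤ) := by linarith
    have hsingle : {c : ℕ × ℕ × ℕ | (c.2.1 ≤ 1) ∧ (c.2.2 < q) ∧
        (m : ℤ) * (2*(q:ℤ)) + (j : ℤ) * d = (c.1 : ℤ) * (2*(q:ℤ))
        + (c.2.1 : ℤ) * (2*(q:ℤ)+(d:ℤ)) + (c.2.2 : ℤ) * (2*(q:ℤ)+2*(d:ℤ))}
        = {(m' + (q + d) * k, r, c2)} := by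
      ext ⟨a, b, c⟩
      simp only [Set.mem_setOf_eq, Set.mem_singleton_iff, Prod.mk.injEq]
      constructor
      · rintro ⟨hb1, hc1, heq⟩
        have heq0 : ((m' + (q + d) * k : ℕ) : ℤ) * (2*(q:ℤ)) + (r : ℤ) * (2*(q:ℤ)+(d:ℤ))
            + (c2 : ℤ) * (2*(q:ℤ)+2*(d:ℤ)) = (a : ℤ) * (2*(q:ℤ))
            + (b : ℤ) * (2*(q:ℤ)+(d:ℤ)) + (c : ℤ) * (2*(q:ℤ)+2*(d:ℤ)) := by
          rw [← heq]
          linear_combination (-(d:ℤ)) * H1 + (-(2*(q:ℤ)+2*(d:ℤ))) * H2 + (2*(q:ℤ)) * H3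
        -- parity gives r = b
        have hdvd2 : (2:ℤ) ∣ ((r : ℤ) - (b:ℤ)) * (d:ℤ) := by
          refine ⟨((a:ℤ) - ((m' + (q + d) * k : ℕ):ℤ)) * (q:ℤ)
            + ((c:ℤ) - (c2:ℤ)) * ((q:ℤ)+(d:ℤ)) + ((b:ℤ) - (r:ℤ)) * (q:ℤ), ?_⟩
          linear_combination heq0
        have hdoZ : ¬ ((2:ℤ) ∣ (d : ℤ)) := by
          intro hcon
          have h2d : (2:ℕ) ∣ d := by exact_mod_cast hcon
          have := d_odd hgcd
          omega
        have hrb : (2:ℤ) ∣ ((r : ℤ) - (b:ℤ)) := by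
          rcases (Int.Prime.dvd_mul' Nat.prime_two hdvd2) with h | h
          · exact h
          · exact absurd h hdoZ
        have hrb' : (b : ℤ) = (r : ℤ) := by
          obtain ⟨w, hw⟩ := hrb
          have hbz : (b:ℤ) ≤ 1 := by exact_mod_cast hb1
          have hrz : (r:ℤ) ≤ 1 := by exact_mod_cast hr1
          have hb0 : (0:ℤ) ≤ b := Int.ofNat_nonneg b
          have hr0 : (0:ℤ) ≤ r := Int.ofNat_nonneg r
          omega
        -- q ∣ (c2 - c)
        have hdvdq : (q:ℤ) ∣ ((c2 : ℤ) - (c:ℤ)) * ((q:ℤ) + (d:ℤ)) := by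
          refine ⟨(a:ℤ) - ((m' + (q + d) * k : ℕ):ℤ), ?_⟩
          have h2E : 2 * (((c2:ℤ) - (c:ℤ)) * ((q:ℤ)+(d:ℤ)))
              = 2 * ((q:ℤ) * ((a:ℤ) - ((m' + (q + d) * k : ℕ):ℤ))) := by
            linear_combination heq0 + (2*(q:ℤ)+(d:ℤ)) * hrb'
          exact mul_left_cancel₀ (by norm_num : (2:ℤ) ≠ 0) h2E
        have hcc : (q:ℤ) ∣ ((c2 : ℤ) - (c:ℤ)) :=
          (isCoprime_q_qd hgcd).dvd_of_dvd_mul_right hdvdq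
        have hcc' : (c : ℤ) = (c2 : ℤ) := by
          obtain ⟨w, hw⟩ := hcc
          have hcz : (c:ℤ) < q := by exact_mod_cast hc1
          have hc2z : (c2:ℤ) < q := by exact_mod_cast hc2q
          have hc0 : (0:ℤ) ≤ c := Int.ofNat_nonneg c
          have hc20 : (0:ℤ) ≤ c2 := Int.ofNat_nonneg c2
          have hqz : (0:ℤ) < (q:ℤ) := by exact_mod_cast hq0
          have hwz : w = 0 := by
            rcases lt_trichotomy w 0 with h | h | h
            · exfalso
              have h1 : (q:ℤ) * w ≤ (q:ℤ) * (-1) :=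
                mul_le_mul_of_nonneg_left (by omega) (le_of_lt hqz)
              linarith
            · exact h
            · exfalso
              have h1 : (q:ℤ) * 1 ≤ (q:ℤ) * w :=
                mul_le_mul_of_nonneg_left (by omega) (le_of_lt hqz)
              linarith
          rw [hwz, mul_zero] at hw
          omega
        -- finally a = c0
        have ha : (a : ℤ) = ((m' + (q + d) * k : ℕ):ℤ) := by
          have hz : (((m' + (q + d) * k : ℕ):ℤ) - (a:ℤ)) * (2*(q:ℤ)) = 0 := by
            linear_combination heq0 + ((2:ℤ)*(q:ℤ)+(d:ℤ)) * hrb'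
              + (2*(q:ℤ)+2*(d:ℤ)) * hcc'
          rcases mul_eq_zero.mp hz with h | h
          · linarith
          · exfalso
            have : (1:ℤ) ≤ q := by exact_mod_cast hq0
            linarith
        refine ⟨by exact_mod_cast ha, by exact_mod_cast hrb', by exact_mod_cast hcc'⟩
      · rintro ⟨rfl, rfl, rfl⟩
        refine ⟨hr1, hc2q, ?_⟩
        linear_combination (d:ℤ) * H1 + (2*(q:ℤ)+2*(d:ℤ)) * H2 + (-2*(q:ℤ)) * H3
    rw [dF, hsingle, Set.ncard_singleton]
    norm_num
  · rw [iS, if_neg hx]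
    have hempty : {c : ℕ × ℕ × ℕ | (c.2.1 ≤ 1) ∧ (c.2.2 < q) ∧
        x = (c.1 : ℤ) * (2*(q:ℤ)) + (c.2.1 : ℤ) * (2*(q:ℤ)+(d:ℤ))
        + (c.2.2 : ℤ) * (2*(q:ℤ)+2*(d:ℤ))} = ∅ := by
      ext ⟨a, b, c⟩
      simp only [Set.mem_setOf_eq, Set.mem_empty_iff_false, iff_false, not_and]
      intro hb hc heq
      exact hx (by rw [hS]; exact ⟨a, b, c, by push_cast at heq ⊢; linarith⟩)
    rw [dF, hempty, Set.ncard_empty]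
    norm_num

end WithS

end MECaux
namespace MECaux

section WithS2

variable {q d : ℕ} {S : Set ℤ}

lemma Nset_finite (hq : 2 ≤ q) (hd : 1 ≤ d) (hS : SEq q d S) (x : ℤ) :
    {p : ℕ × ℕ | x - (p.1 : ℤ) * (2*(2*(q:ℤ)+(d:ℤ)))
      - (p.2 : ℤ) * (2*(q:ℤ)*((q:ℤ)+(d:ℤ))) ∈ S}.Finite := by
  apply finite_pair x.toNat
  rintro ⟨a, b⟩ hp
  simp only [Set.mem_setOf_eq] at hp
  have h0 := S_nonneg hS hp
  have hA := hg1' (q := q) (d := d) (by omega) hd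
  have hB := hB' (q := q) (d := d) (by omega) hd
  have ha0 : (0:ℤ) ≤ a := Int.ofNat_nonneg a
  have hb0 : (0:ℤ) ≤ b := Int.ofNat_nonneg b
  have ha : (a : ℤ) ≤ x := by nlinarith
  have hb : (b : ℤ) ≤ x := by nlinarith
  exact ⟨show a ≤ x.toNat by omega, show b ≤ x.toNat by omega⟩

lemma Mset_finite (hq : 2 ≤ q) (hd : 1 ≤ d) (hS : SEq q d S) (x : ℤ) :
    {l : ℕ | x - (l : ℤ) * (2*(q:ℤ)*((q:ℤ)+(d:ℤ))) ∈ S}.Finite := by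
  apply finite_nat x.toNat
  intro a hp
  have h0 := S_nonneg hS hp
  have hB := hB' (q := q) (d := d) (by omega) hd
  have ha0 : (0:ℤ) ≤ a := Int.ofNat_nonneg a
  have ha : (a : ℤ) ≤ x := by nlinarith
  omega

lemma Ncnt_neg (hS : SEq q d S) {x : ℤ} (hx : x < 0) (hq : 2 ≤ q) (hd : 1 ≤ d) :
    Ncnt q d S x = 0 := by
  rw [Ncnt]
  convert Set.ncard_empty (ℕ × ℕ)
  ext ⟨a, b⟩
  simp only [Set.mem_setOf_eq, Set.mem_empty_iff_false, iff_false]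
  intro hp
  have h0 := S_nonneg hS hp
  have hA := hg1' (q := q) (d := d) (by omega) hd
  have hB := hB' (q := q) (d := d) (by omega) hd
  have ha0 : (0:ℤ) ≤ a := Int.ofNat_nonneg a
  have hb0 : (0:ℤ) ≤ b := Int.ofNat_nonneg b
  nlinarith

lemma Mcnt_neg (hS : SEq q d S) {x : ℤ} (hx : x < 0) (hq : 2 ≤ q) (hd : 1 ≤ d) :
    Mcnt q d S x = 0 := by
  rw [Mcnt]
  convert Set.ncard_empty ℕ
  ext a
  simp only [Set.mem_setOf_eq, Set.mem_empty_iff_false, iff_false]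
  intro hp
  have h0 := S_nonneg hS hp
  have hB := hB' (q := q) (d := d) (by omega) hd
  have ha0 : (0:ℤ) ≤ a := Int.ofNat_nonneg a
  nlinarith

lemma Ncnt_rec (hq : 2 ≤ q) (hd : 1 ≤ d) (hS : SEq q d S) (x : ℤ) :
    Ncnt q d S x = Mcnt q d S x + Ncnt q d S (x - 2*(2*(q:ℤ)+(d:ℤ))) := by
  rw [Ncnt, ncard_split_fst _ (Nset_finite hq hd hS x) 1 le_rfl]
  congr 1
  · apply ncard_eq_of_image (fun l : ℕ => ((0:ℕ), l))
    · intro a b h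
      simpa using h
    · ext ⟨a, b⟩
      simp only [Set.mem_setOf_eq, Set.mem_image, Prod.mk.injEq]
      constructor
      · rintro ⟨hp, ha⟩
        have ha0 : a = 0 := by omega
        subst ha0
        refine ⟨b, ?_, rfl, rfl⟩
        convert hp using 2
        push_cast
        ring
      · rintro ⟨l, hp, h0, hb⟩
        subst h0; subst hb
        refine ⟨?_, by omega⟩
        convert hp using 2
        push_cast
        ring
  · apply congrArg Set.ncard
    ext ⟨a, b⟩
    simp only [Set.mem_setOf_eq]
    constructor <;> intro h <;> (convert h using 2; push_cast; ring)

lemma Mcnt_rec (hq : 2 ≤ q) (hd : 1 ≤ d) (hS : SEq q d S) (x : ℤ) :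
    (Mcnt q d S x : ℤ) = iS S x + (Mcnt q d S (x - 2*(q:ℤ)*((q:ℤ)+(d:ℤ))) : ℤ) := by
  classical
  rw [Mcnt, ncard_split_nat _ (Mset_finite hq hd hS x) 1 le_rfl]
  push_cast
  have h2 : {b : ℕ | b + 1 ∈ {l : ℕ | x - (l : ℤ) * (2*(q:ℤ)*((q:ℤ)+(d:ℤ))) ∈ S}}.ncard
      = Mcnt q d S (x - 2*(q:ℤ)*((q:ℤ)+(d:ℤ))) := by
    apply congrArg Set.ncard
    ext a
    simp only [Set.mem_setOf_eq]
    rw [show x - ((a + 1 : ℕ) : ℤ) * (2*(q:ℤ)*((q:ℤ)+(d:ℤ)))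
      = x - 2*(q:ℤ)*((q:ℤ)+(d:ℤ)) - (a : ℤ) * (2*(q:ℤ)*((q:ℤ)+(d:ℤ))) from by push_cast; ring]
  rw [h2]
  have h1 : {a ∈ {l : ℕ | x - (l : ℤ) * (2*(q:ℤ)*((q:ℤ)+(d:ℤ))) ∈ S} | a < 1}.ncard
      = if x ∈ S then 1 else 0 := by
    by_cases hx : x ∈ S
    · rw [if_pos hx]
      have : {a ∈ {l : ℕ | x - (l : ℤ) * (2*(q:ℤ)*((q:ℤ)+(d:ℤ))) ∈ S} | a < 1} = {0} := by
        ext a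
        simp only [Set.mem_setOf_eq, Set.mem_singleton_iff]
        constructor
        · rintro ⟨-, h⟩; omega
        · rintro rfl
          refine ⟨?_, by omega⟩
          simpa using hx
      rw [this, Set.ncard_singleton]
    · rw [if_neg hx]
      have : {a ∈ {l : ℕ | x - (l : ℤ) * (2*(q:ℤ)*((q:ℤ)+(d:ℤ))) ∈ S} | a < 1} = ∅ := by
        ext a
        simp only [Set.mem_setOf_eq, Set.mem_empty_iff_false, iff_false, not_and]
        intro h hlt
        have : a = 0 := by omega
        subst this
        simp at h
        exact hx h
      rw [this, Set.ncard_empty]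
  rw [h1]
  by_cases hx : x ∈ S <;> simp [iS, hx]

/-- `iS` as an alternating sum of denumerants (complete intersection property). -/
lemma star (hq : 2 ≤ q) (hd : 1 ≤ d) (hgcd : Nat.gcd (2 * q) d = 1) (hS : SEq q d S)
    (x : ℤ) : iS S x = (dN q d x : ℤ) - dN q d (x - (4*(q:ℤ)+2*(d:ℤ)))
      - dN q d (x - 2*(q:ℤ)*((q:ℤ)+(d:ℤ)))
      + dN q d (x - 2*(q:ℤ)*((q:ℤ)+(d:ℤ)) - (4*(q:ℤ)+2*(d:ℤ))) := by
  have hq1 : 1 ≤ q := by omega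
  have h0 := dF_eq_iS hq hd hgcd hS x
  have h1 := dN_rec1 hq1 hd x
  have h2 := dA_rec hq1 hd x
  have h3 := dN_rec1 hq1 hd (x - 2*(q:ℤ)*((q:ℤ)+(d:ℤ)))
  have h4 := dA_rec hq1 hd x
  rw [← h0]
  ring_nf at h1 h2 h3 ⊢
  omega

/-- Inclusion-exclusion over the three generators. -/
lemma IE (hq : 2 ≤ q) (hd : 1 ≤ d) (x : ℤ) :
    (dN q d x : ℤ) - dN q d (x - 2*(q:ℤ)) - dN q d (x - (2*(q:ℤ)+(d:ℤ)))
      - dN q d (x - (2*(q:ℤ)+2*(d:ℤ))) + dN q d (x - (2*(q:ℤ)+(d:ℤ)) - 2*(q:ℤ))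
      + dN q d (x - (2*(q:ℤ)+2*(d:ℤ)) - 2*(q:ℤ))
      + dN q d (x - (2*(q:ℤ)+2*(d:ℤ)) - (2*(q:ℤ)+(d:ℤ)))
      - dN q d (x - (2*(q:ℤ)+2*(d:ℤ)) - (2*(q:ℤ)+(d:ℤ)) - 2*(q:ℤ)) = e0 x := by
  have hq1 : 1 ≤ q := by omega
  have a1 := dN_rec0 hq1 hd x
  have a2 := dN_rec0 hq1 hd (x - (2*(q:ℤ)+(d:ℤ)))
  have a3 := dN_rec0 hq1 hd (x - (2*(q:ℤ)+2*(d:ℤ)))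
  have a4 := dN_rec0 hq1 hd (x - (2*(q:ℤ)+2*(d:ℤ)) - (2*(q:ℤ)+(d:ℤ)))
  have b1 := dN2_rec hq1 hd x
  have b2 := dN2_rec hq1 hd (x - (2*(q:ℤ)+2*(d:ℤ)))
  have c1 := dN1_rec hq1 hd x
  simp only [e0]
  ring_nf at a1 a2 a3 a4 b1 b2 c1 ⊢
  omega

/-- The eight-fold alternating sum of the indicator of `S`. -/
lemma key8 (hq : 2 ≤ q) (hd : 1 ≤ d) (hgcd : Nat.gcd (2 * q) d = 1) (hS : SEq q d S)
    (x : ℤ) :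
    iS S x - iS S (x - 2*(q:ℤ)) - iS S (x - (2*(q:ℤ)+(d:ℤ)))
      - iS S (x - (2*(q:ℤ)+2*(d:ℤ))) + iS S (x - (2*(q:ℤ)+(d:ℤ)) - 2*(q:ℤ))
      + iS S (x - (2*(q:ℤ)+2*(d:ℤ)) - 2*(q:ℤ))
      + iS S (x - (2*(q:ℤ)+2*(d:ℤ)) - (2*(q:ℤ)+(d:ℤ)))
      - iS S (x - (2*(q:ℤ)+2*(d:ℤ)) - (2*(q:ℤ)+(d:ℤ)) - 2*(q:ℤ))
    = e0 x - e0 (x - (4*(q:ℤ)+2*(d:ℤ))) - e0 (x - 2*(q:ℤ)*((q:ℤ)+(d:ℤ)))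
      + e0 (x - 2*(q:ℤ)*((q:ℤ)+(d:ℤ)) - (4*(q:ℤ)+2*(d:ℤ))) := by
  have s1 := star hq hd hgcd hS x
  have s2 := star hq hd hgcd hS (x - 2*(q:ℤ))
  have s3 := star hq hd hgcd hS (x - (2*(q:ℤ)+(d:ℤ)))
  have s4 := star hq hd hgcd hS (x - (2*(q:ℤ)+2*(d:ℤ)))
  have s5 := star hq hd hgcd hS (x - (2*(q:ℤ)+(d:ℤ)) - 2*(q:ℤ))
  have s6 := star hq hd hgcd hS (x - (2*(q:ℤ)+2*(d:ℤ)) - 2*(q:ℤ))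
  have s7 := star hq hd hgcd hS (x - (2*(q:ℤ)+2*(d:ℤ)) - (2*(q:ℤ)+(d:ℤ)))
  have s8 := star hq hd hgcd hS (x - (2*(q:ℤ)+2*(d:ℤ)) - (2*(q:ℤ)+(d:ℤ)) - 2*(q:ℤ))
  have i1 := IE hq hd x
  have i2 := IE hq hd (x - (4*(q:ℤ)+2*(d:ℤ)))
  have i3 := IE hq hd (x - 2*(q:ℤ)*((q:ℤ)+(d:ℤ)))
  have i4 := IE hq hd (x - 2*(q:ℤ)*((q:ℤ)+(d:ℤ)) - (4*(q:ℤ)+2*(d:ℤ)))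
  ring_nf at s1 s2 s3 s4 s5 s6 s7 s8 i1 i2 i3 i4 ⊢
  omega

end WithS2

end MECaux
namespace MECaux

section WithS3

variable {q d : ℕ} {S : Set ℤ}

lemma e0_nonzero {x : ℤ} (hx : x ≠ 0) : e0 x = 0 := by
  rw [e0, if_neg hx]

/-- The alternating 8-fold sum of `Ncnt` equals `e0`. -/
lemma Esum (hq : 2 ≤ q) (hd : 1 ≤ d) (hgcd : Nat.gcd (2 * q) d = 1) (hS : SEq q d S)
    (x : ℤ) :
    (Ncnt q d S x : ℤ) - Ncnt q d S (x - 2*(q:ℤ)) - Ncnt q d S (x - (2*(q:ℤ)+(d:ℤ)))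
      - Ncnt q d S (x - (2*(q:ℤ)+2*(d:ℤ))) + Ncnt q d S (x - (2*(q:ℤ)+(d:ℤ)) - 2*(q:ℤ))
      + Ncnt q d S (x - (2*(q:ℤ)+2*(d:ℤ)) - 2*(q:ℤ))
      + Ncnt q d S (x - (2*(q:ℤ)+2*(d:ℤ)) - (2*(q:ℤ)+(d:ℤ)))
      - Ncnt q d S (x - (2*(q:ℤ)+2*(d:ℤ)) - (2*(q:ℤ)+(d:ℤ)) - 2*(q:ℤ)) = e0 x := by
  have hq' : (2:ℤ) ≤ (q:ℤ) := by exact_mod_cast hq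
  have hd' : (1:ℤ) ≤ (d:ℤ) := by exact_mod_cast hd
  -- step 1 : the M-sum
  have hu1 : ∀ y : ℤ,
      ((Mcnt q d S y : ℤ) - Mcnt q d S (y - 2*(q:ℤ)) - Mcnt q d S (y - (2*(q:ℤ)+(d:ℤ)))
      - Mcnt q d S (y - (2*(q:ℤ)+2*(d:ℤ))) + Mcnt q d S (y - (2*(q:ℤ)+(d:ℤ)) - 2*(q:ℤ))
      + Mcnt q d S (y - (2*(q:ℤ)+2*(d:ℤ)) - 2*(q:ℤ))
      + Mcnt q d S (y - (2*(q:ℤ)+2*(d:ℤ)) - (2*(q:ℤ)+(d:ℤ)))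
      - Mcnt q d S (y - (2*(q:ℤ)+2*(d:ℤ)) - (2*(q:ℤ)+(d:ℤ)) - 2*(q:ℤ)))
      - (e0 y - e0 (y - (4*(q:ℤ)+2*(d:ℤ)))) = 0 := by
    apply vanish_of_step _ (2*(q:ℤ)*((q:ℤ)+(d:ℤ))) (hB' (by omega) hd)
    · intro y hy
      rw [Mcnt_neg hS (by linarith) hq hd, Mcnt_neg hS (by linarith) hq hd,
        Mcnt_neg hS (by linarith) hq hd, Mcnt_neg hS (by linarith) hq hd,
        Mcnt_neg hS (by linarith) hq hd, Mcnt_neg hS (by linarith) hq hd,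
        Mcnt_neg hS (by linarith) hq hd, Mcnt_neg hS (by linarith) hq hd,
        e0_nonzero (by omega), e0_nonzero (by omega)]
      norm_num
    · intro y
      have m1 := Mcnt_rec hq hd hS y
      have m2 := Mcnt_rec hq hd hS (y - 2*(q:ℤ))
      have m3 := Mcnt_rec hq hd hS (y - (2*(q:ℤ)+(d:ℤ)))
      have m4 := Mcnt_rec hq hd hS (y - (2*(q:ℤ)+2*(d:ℤ)))
      have m5 := Mcnt_rec hq hd hS (y - (2*(q:ℤ)+(d:ℤ)) - 2*(q:ℤ))
      have m6 := Mcnt_rec hq hd hS (y - (2*(q:ℤ)+2*(d:ℤ)) - 2*(q:ℤ))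
      have m7 := Mcnt_rec hq hd hS (y - (2*(q:ℤ)+2*(d:ℤ)) - (2*(q:ℤ)+(d:ℤ)))
      have m8 := Mcnt_rec hq hd hS (y - (2*(q:ℤ)+2*(d:ℤ)) - (2*(q:ℤ)+(d:ℤ)) - 2*(q:ℤ))
      have k1 := key8 hq hd hgcd hS y
      ring_nf at m1 m2 m3 m4 m5 m6 m7 m8 k1 ⊢
      omega
  -- step 2 : the N-sum
  have hu2 : ∀ y : ℤ,
      ((Ncnt q d S y : ℤ) - Ncnt q d S (y - 2*(q:ℤ)) - Ncnt q d S (y - (2*(q:ℤ)+(d:ℤ)))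
      - Ncnt q d S (y - (2*(q:ℤ)+2*(d:ℤ))) + Ncnt q d S (y - (2*(q:ℤ)+(d:ℤ)) - 2*(q:ℤ))
      + Ncnt q d S (y - (2*(q:ℤ)+2*(d:ℤ)) - 2*(q:ℤ))
      + Ncnt q d S (y - (2*(q:ℤ)+2*(d:ℤ)) - (2*(q:ℤ)+(d:ℤ)))
      - Ncnt q d S (y - (2*(q:ℤ)+2*(d:ℤ)) - (2*(q:ℤ)+(d:ℤ)) - 2*(q:ℤ)))
      - e0 y = 0 := by
    apply vanish_of_step _ (2*(2*(q:ℤ)+(d:ℤ))) (by linarith)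
    · intro y hy
      rw [Ncnt_neg hS (by linarith) hq hd, Ncnt_neg hS (by linarith) hq hd,
        Ncnt_neg hS (by linarith) hq hd, Ncnt_neg hS (by linarith) hq hd,
        Ncnt_neg hS (by linarith) hq hd, Ncnt_neg hS (by linarith) hq hd,
        Ncnt_neg hS (by linarith) hq hd, Ncnt_neg hS (by linarith) hq hd,
        e0_nonzero (by omega)]
      norm_num
    · intro y
      have n1 := Ncnt_rec hq hd hS y
      have n2 := Ncnt_rec hq hd hS (y - 2*(q:ℤ))
      have n3 := Ncnt_rec hq hd hS (y - (2*(q:ℤ)+(d:ℤ)))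
      have n4 := Ncnt_rec hq hd hS (y - (2*(q:ℤ)+2*(d:ℤ)))
      have n5 := Ncnt_rec hq hd hS (y - (2*(q:ℤ)+(d:ℤ)) - 2*(q:ℤ))
      have n6 := Ncnt_rec hq hd hS (y - (2*(q:ℤ)+2*(d:ℤ)) - 2*(q:ℤ))
      have n7 := Ncnt_rec hq hd hS (y - (2*(q:ℤ)+2*(d:ℤ)) - (2*(q:ℤ)+(d:ℤ)))
      have n8 := Ncnt_rec hq hd hS (y - (2*(q:ℤ)+2*(d:ℤ)) - (2*(q:ℤ)+(d:ℤ)) - 2*(q:ℤ))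
      have hm := hu1 y
      ring_nf at n1 n2 n3 n4 n5 n6 n7 n8 hm ⊢
      omega
  have := hu2 x
  linarith

lemma hcnt_neg (hq : 2 ≤ q) (hd : 1 ≤ d) {x : ℤ} (hx : x < 0) : hcnt q d x = 0 := by
  rw [hcnt]
  convert Set.ncard_empty (ℕ × ℕ)
  ext ⟨a, b⟩
  simp only [Set.mem_setOf_eq, Set.mem_empty_iff_false, iff_false]
  intro hp
  have hA := hg1' (q := q) (d := d) (by omega) hd
  have hB := hB' (q := q) (d := d) (by omega) hd
  have ha0 : (0:ℤ) ≤ a := Int.ofNat_nonneg a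
  have hb0 : (0:ℤ) ≤ b := Int.ofNat_nonneg b
  nlinarith

lemma hcnt_zero (hq : 2 ≤ q) (hd : 1 ≤ d) : hcnt q d 0 = 1 := by
  rw [hcnt]
  have hA := hg1' (q := q) (d := d) (by omega) hd
  have hB := hB' (q := q) (d := d) (by omega) hd
  have : {p : ℕ × ℕ | (0:ℤ) = (p.1 : ℤ) * (2*(2*(q:ℤ)+(d:ℤ)))
      + (p.2 : ℤ) * (2*(q:ℤ)*((q:ℤ)+(d:ℤ)))} = {((0:ℕ), (0:ℕ))} := by
    ext ⟨a, b⟩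
    simp only [Set.mem_setOf_eq, Set.mem_singleton_iff, Prod.mk.injEq]
    constructor
    · intro h
      have ha0 : (0:ℤ) ≤ a := Int.ofNat_nonneg a
      have hb0 : (0:ℤ) ≤ b := Int.ofNat_nonneg b
      have h1 : (a:ℤ) = 0 := by nlinarith
      have h2 : (b:ℤ) = 0 := by nlinarith
      exact ⟨by exact_mod_cast h1, by exact_mod_cast h2⟩
    · rintro ⟨rfl, rfl⟩
      norm_num
  rw [this, Set.ncard_singleton]

lemma fF_neg (hq : 2 ≤ q) (hd : 1 ≤ d) {x : ℤ} (hx : x < 0) : fF q d x = 0 := by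
  have hq' : (2:ℤ) ≤ (q:ℤ) := by exact_mod_cast hq
  have hd' : (1:ℤ) ≤ (d:ℤ) := by exact_mod_cast hd
  rw [fF, hcnt_neg hq hd (by linarith), hcnt_neg hq hd (by linarith),
    hcnt_neg hq hd (by linarith), hcnt_neg hq hd (by linarith),
    hcnt_neg hq hd (by linarith), hcnt_neg hq hd (by linarith),
    hcnt_neg hq hd (by linarith), hcnt_neg hq hd (by linarith)]
  norm_num

lemma fF_zero (hq : 2 ≤ q) (hd : 1 ≤ d) : fF q d 0 = 1 := by
  have hq' : (2:ℤ) ≤ (q:ℤ) := by exact_mod_cast hq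
  have hd' : (1:ℤ) ≤ (d:ℤ) := by exact_mod_cast hd
  rw [fF, hcnt_zero hq hd, hcnt_neg hq hd (by linarith), hcnt_neg hq hd (by linarith),
    hcnt_neg hq hd (by linarith), hcnt_neg hq hd (by linarith),
    hcnt_neg hq hd (by linarith), hcnt_neg hq hd (by linarith),
    hcnt_neg hq hd (by linarith)]
  norm_num

open Classical in
/-- Convolution of the indicator of `S` with `hcnt`. -/
lemma conv (hq : 2 ≤ q) (hd : 1 ≤ d) (hS : SEq q d S) (x σ : ℤ) (hσ : 0 ≤ σ) :
    ∑ c ∈ Finset.Icc 0 x, (if x - c ∈ S then (hcnt q d (c - σ) : ℤ) else 0)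
      = (Ncnt q d S (x - σ) : ℤ) := by
  classical
  have hA := hg1' (q := q) (d := d) (by omega) hd
  have hB := hB' (q := q) (d := d) (by omega) hd
  have hfin := Nset_finite hq hd hS (x - σ)
  rw [Ncnt, Set.ncard_eq_toFinset_card _ hfin]
  have hmap : ∀ p ∈ hfin.toFinset,
      (σ + (p.1 : ℤ) * (2*(2*(q:ℤ)+(d:ℤ))) + (p.2 : ℤ) * (2*(q:ℤ)*((q:ℤ)+(d:ℤ))))
        ∈ Finset.Icc 0 x := by
    rintro ⟨a, b⟩ hp
    rw [Set.Finite.mem_toFinset] at hp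
    simp only [Set.mem_setOf_eq] at hp
    have h0 := S_nonneg hS hp
    have ha0 : (0:ℤ) ≤ a := Int.ofNat_nonneg a
    have hb0 : (0:ℤ) ≤ b := Int.ofNat_nonneg b
    rw [Finset.mem_Icc]
    constructor
    · nlinarith
    · nlinarith
  rw [Finset.card_eq_sum_card_fiberwise hmap]
  push_cast
  apply Finset.sum_congr rfl
  intro c hc
  rw [Finset.mem_Icc] at hc
  by_cases hcS : x - c ∈ S
  · rw [if_pos hcS]
    have hfin2 := finite_sol2 (g0 := 2*(2*(q:ℤ)+(d:ℤ))) (g1 := 2*(q:ℤ)*((q:ℤ)+(d:ℤ)))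
      (c - σ) (by linarith) (by linarith)
    rw [hcnt, Set.ncard_eq_toFinset_card _ hfin2]
    congr 1
    refine congrArg Finset.card (Finset.ext ?_)
    rintro ⟨a, b⟩
    rw [Finset.mem_filter, Set.Finite.mem_toFinset, Set.Finite.mem_toFinset]
    simp only [Set.mem_setOf_eq]
    constructor
    · intro heq
      constructor
      · have h3 : x - σ - (a:ℤ) * (2*(2*(q:ℤ)+(d:ℤ))) - (b:ℤ) * (2*(q:ℤ)*((q:ℤ)+(d:ℤ)))
            = x - c := by linarith
        rw [h3]
        exact hcS
      · linarith
    · rintro ⟨hp, heq⟩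
      linarith
  · rw [if_neg hcS]
    rw [Finset.card_eq_zero.mpr, Nat.cast_zero]
    apply Finset.filter_eq_empty_iff.mpr
    rintro ⟨a, b⟩ hp
    rw [Set.Finite.mem_toFinset] at hp
    simp only [Set.mem_setOf_eq] at hp
    intro heq
    apply hcS
    have : x - c = x - σ - (a:ℤ) * (2*(2*(q:ℤ)+(d:ℤ))) - (b:ℤ) * (2*(q:ℤ)*((q:ℤ)+(d:ℤ))) := by
      linarith
    rw [this]
    exact hp

lemma mob_zero (hS : SEq q d S) {c : ℤ} (hc : c ∉ S) : mobiusRed S c = 0 := by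
  rw [mobiusRed, mobius2]
  rw [if_neg, if_neg]
  · intro h
    rw [sub_zero] at h
    exact hc h
  · intro h
    subst h
    exact hc (zero_memS hS)

end WithS3

end MECaux
namespace MECaux

section WithS4

variable {q d : ℕ} {S : Set ℤ}

lemma mob_eq_fF (hq : 2 ≤ q) (hd : 1 ≤ d) (hgcd : Nat.gcd (2 * q) d = 1)
    (hS : SEq q d S) : ∀ x : ℤ, mobiusRed S x = fF q d x := by
  classical
  have main : ∀ n : ℕ, ∀ x : ℤ, x.toNat = n → mobiusRed S x = fF q d x := by
    intro n
    induction n using Nat.strong_induction_on with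
    | _ n ih =>
    intro x hxn
    rcases lt_trichotomy x 0 with hx | hx | hx
    · rw [fF_neg hq hd hx, mob_zero hS]
      intro hmem
      exact absurd (S_nonneg hS hmem) (by omega)
    · subst hx
      rw [mobiusRed, mobius2, if_pos rfl, fF_zero hq hd]
    · -- x > 0
      have hsum : ∑ c ∈ Finset.Icc 0 x, (if x - c ∈ S then fF q d c else 0) = 0 := by
        have e1 := conv hq hd hS x 0 le_rfl
        have e2 := conv hq hd hS x (2*(q:ℤ)) (by positivity)
        have e3 := conv hq hd hS x (2*(q:ℤ)+(d:ℤ)) (by positivity)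
        have e4 := conv hq hd hS x (2*(q:ℤ)+2*(d:ℤ)) (by positivity)
        have e5 := conv hq hd hS x (4*(q:ℤ)+(d:ℤ)) (by positivity)
        have e6 := conv hq hd hS x (4*(q:ℤ)+2*(d:ℤ)) (by positivity)
        have e7 := conv hq hd hS x (4*(q:ℤ)+3*(d:ℤ)) (by positivity)
        have e8 := conv hq hd hS x (6*(q:ℤ)+3*(d:ℤ)) (by positivity)
        have eS := Esum hq hd hgcd hS x
        have he0 : e0 x = 0 := e0_nonzero (by omega)
        have hexp : ∀ c : ℤ, (if x - c ∈ S then fF q d c else 0)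
            = (if x - c ∈ S then (hcnt q d (c - 0) : ℤ) else 0)
            - (if x - c ∈ S then (hcnt q d (c - 2*(q:ℤ)) : ℤ) else 0)
            - (if x - c ∈ S then (hcnt q d (c - (2*(q:ℤ)+(d:ℤ))) : ℤ) else 0)
            - (if x - c ∈ S then (hcnt q d (c - (2*(q:ℤ)+2*(d:ℤ))) : ℤ) else 0)
            + (if x - c ∈ S then (hcnt q d (c - (4*(q:ℤ)+(d:ℤ))) : ℤ) else 0)
            + (if x - c ∈ S then (hcnt q d (c - (4*(q:ℤ)+2*(d:ℤ))) : ℤ) else 0)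
            + (if x - c ∈ S then (hcnt q d (c - (4*(q:ℤ)+3*(d:ℤ))) : ℤ) else 0)
            - (if x - c ∈ S then (hcnt q d (c - (6*(q:ℤ)+3*(d:ℤ))) : ℤ) else 0) := by
          intro c
          by_cases h : x - c ∈ S
          · simp only [if_pos h, fF]
            ring_nf
          · simp only [if_neg h]
            ring
        rw [Finset.sum_congr rfl (fun c _ => hexp c)]
        simp only [Finset.sum_sub_distrib, Finset.sum_add_distrib]
        rw [e1, e2, e3, e4, e5, e6, e7, e8]
        ring_nf at eS he0 ⊢
        omega
      have hsplit : ∑ c ∈ Finset.Icc 0 x, (if x - c ∈ S then fF q d c else 0)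
          = (∑ c ∈ Finset.Ico 0 x, (if x - c ∈ S then fF q d c else 0)) + fF q d x := by
        have hins : Finset.Icc (0:ℤ) x = insert x (Finset.Ico 0 x) := by
          ext y
          simp only [Finset.mem_Icc, Finset.mem_Ico, Finset.mem_insert]
          omega
        rw [hins, Finset.sum_insert (by simp [Finset.mem_Ico])]
        rw [show x - x = (0:ℤ) from sub_self x, if_pos (zero_memS hS)]
        ring
      by_cases hxS : x ∈ S
      · rw [mobiusRed, mobius2, if_neg (by omega : ¬(0:ℤ) = x),
          if_pos (show x - 0 ∈ S by simpa using hxS)]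
        rw [Finset.sum_attach (Finset.Ico 0 x)
          (fun y => if (y - 0 ∈ S ∧ x - y ∈ S) then mobius2 S 0 y else 0)]
        have hterm : ∀ c ∈ Finset.Ico 0 x,
            (if (c - 0 ∈ S ∧ x - c ∈ S) then mobius2 S 0 c else 0)
            = (if x - c ∈ S then fF q d c else 0) := by
          intro c hc
          rw [Finset.mem_Ico] at hc
          have hihc : mobiusRed S c = fF q d c := ih c.toNat (by omega) c rfl
          by_cases h2 : x - c ∈ S
          · rw [if_pos h2]
            by_cases h1 : c ∈ S
            · rw [if_pos ⟨by simpa using h1, h2⟩]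
              exact hihc
            · rw [if_neg (fun hcon => h1 (by simpa using hcon.1)), ← hihc,
                mob_zero hS h1]
          · rw [if_neg h2, if_neg (fun hcon => h2 hcon.2)]
        rw [Finset.sum_congr rfl hterm]
        rw [hsplit] at hsum
        linarith
      · rw [mobiusRed, mobius2, if_neg (by omega : ¬(0:ℤ) = x),
          if_neg (show ¬ (x - 0 ∈ S) by simpa using hxS)]
        have hIco : ∑ c ∈ Finset.Ico 0 x, (if x - c ∈ S then fF q d c else 0) = 0 := by
          apply Finset.sum_eq_zero
          intro c hc
          rw [Finset.mem_Ico] at hc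
          by_cases h2 : x - c ∈ S
          · rw [if_pos h2]
            have hihc : mobiusRed S c = fF q d c := ih c.toNat (by omega) c rfl
            by_cases h1 : c ∈ S
            · exact absurd (by simpa using S_add hS h1 h2) hxS
            · rw [← hihc, mob_zero hS h1]
          · rw [if_neg h2]
        rw [hsplit, hIco] at hsum
        linarith
  intro x
  exact main x.toNat x rfl

end WithS4

end MECaux
namespace MECaux

lemma ncard_eq_of_image' {α β : Type*} {s : Set β} {t : Set α} (f : α → β)
    (hf : Set.InjOn f t) (hst : s = f '' t) : s.ncard = t.ncard := by
  rw [hst, Set.ncard_image_of_injOn hf]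

section Eval

variable {q d : ℕ}

lemma isCoprime_q_G (hgcd : Nat.gcd (2 * q) d = 1) :
    IsCoprime (q : ℤ) (2*(q:ℤ)+(d:ℤ)) := by
  have h := (isCoprime_qd hgcd).add_mul_left_right 2
  rw [show (d:ℤ) + (q:ℤ)*2 = 2*(q:ℤ)+(d:ℤ) from by ring] at h
  exact h

lemma hcnt_odd (hq : 2 ≤ q) (hd : 1 ≤ d) {y : ℤ} (h : ¬ ((2:ℤ) ∣ y)) :
    hcnt q d y = 0 := by
  rw [hcnt]
  convert Set.ncard_empty (ℕ × ℕ)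
  ext ⟨a, b⟩
  simp only [Set.mem_setOf_eq, Set.mem_empty_iff_false, iff_false]
  intro hp
  exact h ⟨(a:ℤ)*(2*(q:ℤ)+(d:ℤ)) + (b:ℤ)*((q:ℤ)*((q:ℤ)+(d:ℤ))), by linear_combination hp⟩

lemma hcnt_even (z : ℤ) : hcnt q d (2*z) = h2 q d z := by
  rw [hcnt, h2]
  apply congrArg Set.ncard
  ext ⟨a, b⟩
  simp only [Set.mem_setOf_eq]
  constructor <;> intro h <;> linarith

/-- Reduction of `h2` at `qu + (2q+d)x₂` to the `(s,l)` count. -/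
lemma h2_red (hq : 2 ≤ q) (hd : 1 ≤ d) (hgcd : Nat.gcd (2 * q) d = 1)
    (u : ℤ) (x2 : ℕ) (hx2 : x2 < q) :
    h2 q d ((q:ℤ)*u + (2*(q:ℤ)+(d:ℤ))*(x2:ℤ)) = slA q d u := by
  rw [h2, slA]
  apply ncard_eq_of_image (fun p : ℕ × ℕ => (x2 + q*p.1, p.2))
  · rintro ⟨s, l⟩ ⟨s', l'⟩ h
    simp only [Prod.mk.injEq] at h
    obtain ⟨h1, h2⟩ := h
    have h3 : q * s = q * s' := Nat.add_left_cancel h1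
    have h4 : s = s' := Nat.eq_of_mul_eq_mul_left (by omega) h3
    rw [Prod.mk.injEq]
    exact ⟨h4, h2⟩
  · ext ⟨k, l⟩
    simp only [Set.mem_setOf_eq, Set.mem_image, Prod.mk.injEq]
    constructor
    · intro heq
      have hdvd : (q:ℤ) ∣ ((k:ℤ) - (x2:ℤ)) * (2*(q:ℤ)+(d:ℤ)) :=
        ⟨u - (l:ℤ)*((q:ℤ)+(d:ℤ)), by linear_combination -heq⟩
      obtain ⟨w, hw⟩ := (isCoprime_q_G hgcd).dvd_of_dvd_mul_right hdvd
      have hq0 : (0:ℤ) < (q:ℤ) := by exact_mod_cast (by omega : 0 < q)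
      have hw0 : 0 ≤ w := by
        by_contra hneg
        push_neg at hneg
        have h1 : (q:ℤ)*w ≤ (q:ℤ)*(-1) := mul_le_mul_of_nonneg_left (by omega) (le_of_lt hq0)
        have hk0 : (0:ℤ) ≤ k := Int.ofNat_nonneg k
        have hx2z : (x2:ℤ) < q := by exact_mod_cast hx2
        linarith
      have hwc : ((w.toNat : ℕ):ℤ) = w := Int.toNat_of_nonneg hw0
      refine ⟨(w.toNat, l), ?_, ?_, rfl⟩
      · apply mul_left_cancel₀ (show (q:ℤ) ≠ 0 by omega)
        rw [show ((w.toNat, l) : ℕ × ℕ).1 = w.toNat from rfl]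
        rw [hwc]
        linear_combination heq + (2*(q:ℤ)+(d:ℤ)) * hw
      · have h5 : (x2:ℤ) + (q:ℤ)*((w.toNat:ℕ):ℤ) = k := by rw [hwc]; linarith
        exact_mod_cast h5
    · rintro ⟨⟨s, l'⟩, hseq, hk, hl⟩
      subst hk
      subst hl
      push_cast
      linear_combination (q:ℤ) * hseq

lemma slA_finite (hq : 2 ≤ q) (hd : 1 ≤ d) (u : ℤ) :
    {p : ℕ × ℕ | u = (p.1 : ℤ) * (2*(q:ℤ)+(d:ℤ)) + (p.2 : ℤ) * ((q:ℤ)+(d:ℤ))}.Finite := by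
  apply finite_sol2 u (hg1' (by omega) hd)
  have h1 : (1:ℤ) ≤ q := by exact_mod_cast (by omega : 1 ≤ q)
  have h2 : (0:ℤ) ≤ d := Int.ofNat_nonneg d
  linarith

lemma slA_split (hq : 2 ≤ q) (hd : 1 ≤ d) (u : ℤ) :
    slA q d u = multA q d 0 u + slB q d u := by
  rw [slA, ncard_split_fst _ (slA_finite hq hd u) 1 le_rfl]
  congr 1
  · apply ncard_eq_of_image (fun m : ℕ => ((0:ℕ), m))
    · intro a b h
      simpa using h
    · ext ⟨a, b⟩
      simp only [Set.mem_setOf_eq, Set.mem_image, Prod.mk.injEq, multA]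
      constructor
      · rintro ⟨hu, ha⟩
        have ha0 : a = 0 := by omega
        subst ha0
        refine ⟨b, ?_, rfl, rfl⟩
        push_cast at hu ⊢
        linarith
      · rintro ⟨m, hm, h0, hb⟩
        subst h0
        subst hb
        refine ⟨?_, by omega⟩
        push_cast at hm ⊢
        linarith
  · symm
    rw [slB]
    apply ncard_eq_of_image (fun p : ℕ × ℕ => (p.1 + 1, p.2))
    · rintro ⟨a, b⟩ ⟨a', b'⟩ h
      simp only [Prod.mk.injEq] at h
      rw [Prod.mk.injEq]
      exact ⟨by omega, h.2⟩
    · ext ⟨s, l⟩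
      simp only [Set.mem_setOf_eq, Set.mem_image, Prod.mk.injEq]
      constructor
      · rintro ⟨hs, hu⟩
        refine ⟨(s - 1, l), ?_, by omega, rfl⟩
        rw [show (s - 1) + 1 = s from by omega]
        exact hu
      · rintro ⟨⟨s', l'⟩, hmem, hk, hl⟩
        subst hk
        subst hl
        exact ⟨by omega, hmem⟩

lemma slB_eq_multB (hq : 2 ≤ q) (hd : 1 ≤ d) (u : ℤ) :
    slB q d u = multB q d 0 u := by
  rw [slB, multB]
  symm
  apply ncard_eq_of_image (fun p : ℕ × ℕ => (2*p.1 + p.2, p.1))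
  · rintro ⟨a, b⟩ ⟨a', b'⟩ h
    simp only [Prod.mk.injEq] at h
    rw [Prod.mk.injEq]
    exact ⟨h.2, by omega⟩
  · ext ⟨m, n⟩
    simp only [Set.mem_setOf_eq, Set.mem_image, Prod.mk.injEq]
    constructor
    · rintro ⟨hm2, hn1, hnm, hu⟩
      refine ⟨(n, m - 2*n), ⟨hn1, ?_⟩, by omega, rfl⟩
      have hmn : ((m - 2*n : ℕ):ℤ) = (m:ℤ) - 2*(n:ℤ) := by omega
      rw [show ((n, m - 2*n) : ℕ × ℕ).1 = n from rfl, show ((n, m - 2*n) : ℕ × ℕ).2 = m - 2*n from rfl,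
        hmn]
      linear_combination hu
    · rintro ⟨⟨s, l⟩, ⟨hs, hu⟩, hm, hn⟩
      subst hm
      subst hn
      refine ⟨by omega, hs, by omega, ?_⟩
      push_cast
      linear_combination hu

lemma h2_boundary (hq : 2 ≤ q) (hd : 1 ≤ d) (hgcd : Nat.gcd (2 * q) d = 1) (u : ℤ) :
    h2 q d ((q:ℤ)*u - (2*(q:ℤ)+(d:ℤ))) = slB q d u := by
  rw [h2, slB]
  apply ncard_eq_of_image' (fun p : ℕ × ℕ => (q*p.1 - 1, p.2))
  · rintro ⟨s, l⟩ hmem ⟨s', l'⟩ hmem' h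
    simp only [Set.mem_setOf_eq] at hmem hmem'
    simp only [Prod.mk.injEq] at h
    obtain ⟨h1, h2⟩ := h
    have hs1 : 1 ≤ q * s := Nat.one_le_iff_ne_zero.mpr (Nat.mul_ne_zero (by omega) (by omega))
    have hs1' : 1 ≤ q * s' := Nat.one_le_iff_ne_zero.mpr (Nat.mul_ne_zero (by omega) (by omega))
    have h3 : q * s = q * s' := by
      have := Nat.sub_add_cancel hs1
      have := Nat.sub_add_cancel hs1'
      omega
    have h4 : s = s' := Nat.eq_of_mul_eq_mul_left (by omega) h3
    rw [Prod.mk.injEq]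
    exact ⟨h4, h2⟩
  · ext ⟨k, l⟩
    simp only [Set.mem_setOf_eq, Set.mem_image, Prod.mk.injEq]
    constructor
    · intro heq
      have hdvd : (q:ℤ) ∣ ((k:ℤ) + 1) * (2*(q:ℤ)+(d:ℤ)) :=
        ⟨u - (l:ℤ)*((q:ℤ)+(d:ℤ)), by linear_combination -heq⟩
      obtain ⟨w, hw⟩ := (isCoprime_q_G hgcd).dvd_of_dvd_mul_right hdvd
      have hq0 : (0:ℤ) < (q:ℤ) := by exact_mod_cast (by omega : 0 < q)
      have hk0 : (0:ℤ) ≤ k := Int.ofNat_nonneg k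
      have hw1 : 1 ≤ w := by
        by_contra hneg
        push_neg at hneg
        have h1 : (q:ℤ)*w ≤ 0 := mul_nonpos_of_nonneg_of_nonpos (le_of_lt hq0) (by omega)
        linarith
      have hwc : ((w.toNat : ℕ):ℤ) = w := Int.toNat_of_nonneg (by omega)
      refine ⟨(w.toNat, l), ⟨by omega, ?_⟩, ?_, rfl⟩
      · apply mul_left_cancel₀ (show (q:ℤ) ≠ 0 by omega)
        rw [show ((w.toNat, l) : ℕ × ℕ).1 = w.toNat from rfl]
        rw [hwc]
        linear_combination heq + (2*(q:ℤ)+(d:ℤ)) * hw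
      · have h5 : ((q * w.toNat : ℕ):ℤ) = (k:ℤ) + 1 := by
          push_cast
          rw [hwc]
          linarith
        have h6 : q * w.toNat = k + 1 := by exact_mod_cast h5
        rw [h6]
        omega
    · rintro ⟨⟨s, l'⟩, ⟨hs, hu⟩, hk, hl⟩
      subst hk
      subst hl
      have hs1 : 1 ≤ q * s := Nat.one_le_iff_ne_zero.mpr (Nat.mul_ne_zero (by omega) (by omega))
      have hc : ((q * s - 1 : ℕ):ℤ) = ((q*s : ℕ):ℤ) - 1 := by omega
      rw [hc]
      push_cast
      linear_combination (q:ℤ) * hu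

lemma h2_eval (hq : 2 ≤ q) (hd : 1 ≤ d) (hgcd : Nat.gcd (2 * q) d = 1)
    (u : ℤ) (x2 : ℕ) (hx2 : x2 < q) :
    h2 q d ((q:ℤ)*u + (2*(q:ℤ)+(d:ℤ))*(x2:ℤ)) = multC q d 0 u := by
  rw [h2_red hq hd hgcd u x2 hx2, slA_split hq hd, slB_eq_multB hq hd, multC]

lemma h2_eval_boundary (hq : 2 ≤ q) (hd : 1 ≤ d) (hgcd : Nat.gcd (2 * q) d = 1) (u : ℤ) :
    h2 q d ((q:ℤ)*u - (2*(q:ℤ)+(d:ℤ))) = multB q d 0 u := by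
  rw [h2_boundary hq hd hgcd, slB_eq_multB hq hd]

lemma multA_shift (i x : ℤ) : multA q d i x = multA q d 0 (x - i) := by
  rw [multA, multA]
  apply congrArg Set.ncard
  ext m
  simp only [Set.mem_setOf_eq]
  constructor <;> intro h <;> linarith

lemma multB_shift (i x : ℤ) : multB q d i x = multB q d 0 (x - i) := by
  rw [multB, multB]
  apply congrArg Set.ncard
  ext ⟨m, n⟩
  simp only [Set.mem_setOf_eq]
  constructor <;> rintro ⟨h1, h2, h3, h4⟩ <;> exact ⟨h1, h2, h3, by linarith⟩

lemma multC_shift (i x : ℤ) : multC q d i x = multC q d 0 (x - i) := by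
  rw [multC, multC, multA_shift, multB_shift]

end Eval

end MECaux
namespace MECaux

section Final

variable {q d : ℕ}

lemma odd_helper (hgcd : Nat.gcd (2 * q) d = 1) {y e : ℤ} (hy : y = 2*e + (d:ℤ)) :
    ¬ ((2:ℤ) ∣ y) := by
  rintro ⟨w, hw⟩
  have h2d : (2:ℤ) ∣ (d:ℤ) := ⟨w - e, by linarith⟩
  have h2d' : (2:ℕ) ∣ d := by exact_mod_cast h2d
  have := d_odd hgcd
  omega

lemma fF_eval_zero (hq : 2 ≤ q) (hd : 1 ≤ d) (hgcd : Nat.gcd (2 * q) d = 1)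
    (x0 : ℤ) (x1 : ℕ) (hx1 : x1 ≤ 1) :
    fF q d (bracket q d x0 x1 0) =
      (-1) ^ x1 * ((multA q d 0 x0 : ℤ) - (multA q d 1 x0 : ℤ) +
        2 * (multB q d 0 x0 : ℤ) - (multB q d (-1) x0 : ℤ) - (multB q d 1 x0 : ℤ)) := by
  have hq0 : 0 < q := by omega
  interval_cases x1
  · have E1 : hcnt q d (bracket q d x0 0 0) = multC q d 0 x0 := by
      rw [show bracket q d x0 0 0 = 2*((q:ℤ)*x0 + (2*(q:ℤ)+(d:ℤ))*(((0:ℕ)):ℤ))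
        from by simp only [bracket]; push_cast; ring, hcnt_even, h2_eval hq hd hgcd x0 0 hq0]
    have E2 : hcnt q d (bracket q d x0 0 0 - 2*(q:ℤ)) = multC q d 0 (x0 - 1) := by
      rw [show bracket q d x0 0 0 - 2*(q:ℤ) = 2*((q:ℤ)*(x0-1) + (2*(q:ℤ)+(d:ℤ))*(((0:ℕ)):ℤ))
        from by simp only [bracket]; push_cast; ring, hcnt_even, h2_eval hq hd hgcd (x0-1) 0 hq0]
    have E3 : hcnt q d (bracket q d x0 0 0 - (2*(q:ℤ)+2*(d:ℤ))) = multB q d 0 (x0 + 1) := by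
      rw [show bracket q d x0 0 0 - (2*(q:ℤ)+2*(d:ℤ)) = 2*((q:ℤ)*(x0+1) - (2*(q:ℤ)+(d:ℤ)))
        from by simp only [bracket]; push_cast; ring, hcnt_even,
        h2_eval_boundary hq hd hgcd (x0+1)]
    have E4 : hcnt q d (bracket q d x0 0 0 - (4*(q:ℤ)+2*(d:ℤ))) = multB q d 0 x0 := by
      rw [show bracket q d x0 0 0 - (4*(q:ℤ)+2*(d:ℤ)) = 2*((q:ℤ)*x0 - (2*(q:ℤ)+(d:ℤ)))
        from by simp only [bracket]; push_cast; ring, hcnt_even,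
        h2_eval_boundary hq hd hgcd x0]
    have O1 : hcnt q d (bracket q d x0 0 0 - (2*(q:ℤ)+(d:ℤ))) = 0 :=
      hcnt_odd hq hd (odd_helper hgcd (show _ = 2*((q:ℤ)*x0 - (q:ℤ) - (d:ℤ)) + (d:ℤ)
        from by simp only [bracket]; push_cast; ring))
    have O2 : hcnt q d (bracket q d x0 0 0 - (4*(q:ℤ)+(d:ℤ))) = 0 :=
      hcnt_odd hq hd (odd_helper hgcd (show _ = 2*((q:ℤ)*x0 - 2*(q:ℤ) - (d:ℤ)) + (d:ℤ)
        from by simp only [bracket]; push_cast; ring))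
    have O3 : hcnt q d (bracket q d x0 0 0 - (4*(q:ℤ)+3*(d:ℤ))) = 0 :=
      hcnt_odd hq hd (odd_helper hgcd (show _ = 2*((q:ℤ)*x0 - 2*(q:ℤ) - 2*(d:ℤ)) + (d:ℤ)
        from by simp only [bracket]; push_cast; ring))
    have O4 : hcnt q d (bracket q d x0 0 0 - (6*(q:ℤ)+3*(d:ℤ))) = 0 :=
      hcnt_odd hq hd (odd_helper hgcd (show _ = 2*((q:ℤ)*x0 - 3*(q:ℤ) - 2*(d:ℤ)) + (d:ℤ)
        from by simp only [bracket]; push_cast; ring))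
    rw [fF, E1, E2, E3, E4, O1, O2, O3, O4]
    rw [multA_shift 1 x0, multB_shift 1 x0, multB_shift (-1) x0,
      show x0 - (-1:ℤ) = x0 + 1 from by ring]
    simp only [multC]
    push_cast
    ring
  · have E1 : hcnt q d (bracket q d x0 1 0 - (2*(q:ℤ)+(d:ℤ))) = multC q d 0 x0 := by
      rw [show bracket q d x0 1 0 - (2*(q:ℤ)+(d:ℤ))
        = 2*((q:ℤ)*x0 + (2*(q:ℤ)+(d:ℤ))*(((0:ℕ)):ℤ))
        from by simp only [bracket]; push_cast; ring, hcnt_even, h2_eval hq hd hgcd x0 0 hq0]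
    have E2 : hcnt q d (bracket q d x0 1 0 - (4*(q:ℤ)+(d:ℤ))) = multC q d 0 (x0 - 1) := by
      rw [show bracket q d x0 1 0 - (4*(q:ℤ)+(d:ℤ))
        = 2*((q:ℤ)*(x0-1) + (2*(q:ℤ)+(d:ℤ))*(((0:ℕ)):ℤ))
        from by simp only [bracket]; push_cast; ring, hcnt_even, h2_eval hq hd hgcd (x0-1) 0 hq0]
    have E3 : hcnt q d (bracket q d x0 1 0 - (4*(q:ℤ)+3*(d:ℤ))) = multB q d 0 (x0 + 1) := by
      rw [show bracket q d x0 1 0 - (4*(q:ℤ)+3*(d:ℤ)) = 2*((q:ℤ)*(x0+1) - (2*(q:ℤ)+(d:ℤ)))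
        from by simp only [bracket]; push_cast; ring, hcnt_even,
        h2_eval_boundary hq hd hgcd (x0+1)]
    have E4 : hcnt q d (bracket q d x0 1 0 - (6*(q:ℤ)+3*(d:ℤ))) = multB q d 0 x0 := by
      rw [show bracket q d x0 1 0 - (6*(q:ℤ)+3*(d:ℤ)) = 2*((q:ℤ)*x0 - (2*(q:ℤ)+(d:ℤ)))
        from by simp only [bracket]; push_cast; ring, hcnt_even,
        h2_eval_boundary hq hd hgcd x0]
    have O1 : hcnt q d (bracket q d x0 1 0) = 0 :=
      hcnt_odd hq hd (odd_helper hgcd (show _ = 2*((q:ℤ)*x0 + (q:ℤ)) + (d:ℤ)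
        from by simp only [bracket]; push_cast; ring))
    have O2 : hcnt q d (bracket q d x0 1 0 - 2*(q:ℤ)) = 0 :=
      hcnt_odd hq hd (odd_helper hgcd (show _ = 2*((q:ℤ)*x0) + (d:ℤ)
        from by simp only [bracket]; push_cast; ring))
    have O3 : hcnt q d (bracket q d x0 1 0 - (2*(q:ℤ)+2*(d:ℤ))) = 0 :=
      hcnt_odd hq hd (odd_helper hgcd (show _ = 2*((q:ℤ)*x0 - (d:ℤ)) + (d:ℤ)
        from by simp only [bracket]; push_cast; ring))
    have O4 : hcnt q d (bracket q d x0 1 0 - (4*(q:ℤ)+2*(d:ℤ))) = 0 :=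
      hcnt_odd hq hd (odd_helper hgcd (show _ = 2*((q:ℤ)*x0 - (q:ℤ) - (d:ℤ)) + (d:ℤ)
        from by simp only [bracket]; push_cast; ring))
    rw [fF, E1, E2, E3, E4, O1, O2, O3, O4]
    rw [multA_shift 1 x0, multB_shift 1 x0, multB_shift (-1) x0,
      show x0 - (-1:ℤ) = x0 + 1 from by ring]
    simp only [multC]
    push_cast
    ring

lemma fF_eval_pos (hq : 2 ≤ q) (hd : 1 ≤ d) (hgcd : Nat.gcd (2 * q) d = 1)
    (x0 : ℤ) (x1 x2 : ℕ) (hx1 : x1 ≤ 1) (hx2l : 1 ≤ x2) (hx2 : x2 ≤ q - 1) :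
    fF q d (bracket q d x0 x1 x2) =
      (-1) ^ x1 * (2 * (multC q d 0 (x0 - x2) : ℤ) -
        (multC q d (-1) (x0 - x2) : ℤ) - (multC q d 1 (x0 - x2) : ℤ)) := by
  have hq0 : 0 < q := by omega
  have hx2q : x2 < q := by omega
  have hx2q' : x2 - 1 < q := by omega
  have hc : ((x2 - 1 : ℕ):ℤ) = (x2:ℤ) - 1 := by omega
  interval_cases x1
  · have E1 : hcnt q d (bracket q d x0 0 x2) = multC q d 0 (x0 - (x2:ℤ)) := by
      rw [show bracket q d x0 0 x2
        = 2*((q:ℤ)*(x0 - (x2:ℤ)) + (2*(q:ℤ)+(d:ℤ))*((x2:ℕ):ℤ))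
        from by simp only [bracket]; push_cast; ring, hcnt_even,
        h2_eval hq hd hgcd (x0 - (x2:ℤ)) x2 hx2q]
    have E2 : hcnt q d (bracket q d x0 0 x2 - 2*(q:ℤ)) = multC q d 0 (x0 - (x2:ℤ) - 1) := by
      rw [show bracket q d x0 0 x2 - 2*(q:ℤ)
        = 2*((q:ℤ)*(x0 - (x2:ℤ) - 1) + (2*(q:ℤ)+(d:ℤ))*((x2:ℕ):ℤ))
        from by simp only [bracket]; push_cast; ring, hcnt_even,
        h2_eval hq hd hgcd (x0 - (x2:ℤ) - 1) x2 hx2q]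
    have E3 : hcnt q d (bracket q d x0 0 x2 - (2*(q:ℤ)+2*(d:ℤ)))
        = multC q d 0 (x0 - (x2:ℤ) + 1) := by
      rw [show bracket q d x0 0 x2 - (2*(q:ℤ)+2*(d:ℤ))
        = 2*((q:ℤ)*(x0 - (x2:ℤ) + 1) + (2*(q:ℤ)+(d:ℤ))*((x2 - 1 : ℕ):ℤ))
        from by rw [hc]; simp only [bracket]; push_cast; ring, hcnt_even,
        h2_eval hq hd hgcd (x0 - (x2:ℤ) + 1) (x2 - 1) hx2q']
    have E4 : hcnt q d (bracket q d x0 0 x2 - (4*(q:ℤ)+2*(d:ℤ)))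
        = multC q d 0 (x0 - (x2:ℤ)) := by
      rw [show bracket q d x0 0 x2 - (4*(q:ℤ)+2*(d:ℤ))
        = 2*((q:ℤ)*(x0 - (x2:ℤ)) + (2*(q:ℤ)+(d:ℤ))*((x2 - 1 : ℕ):ℤ))
        from by rw [hc]; simp only [bracket]; push_cast; ring, hcnt_even,
        h2_eval hq hd hgcd (x0 - (x2:ℤ)) (x2 - 1) hx2q']
    have O1 : hcnt q d (bracket q d x0 0 x2 - (2*(q:ℤ)+(d:ℤ))) = 0 :=
      hcnt_odd hq hd (odd_helper hgcd
        (show _ = 2*((q:ℤ)*x0 + ((q:ℤ)+(d:ℤ))*(x2:ℤ) - (q:ℤ) - (d:ℤ)) + (d:ℤ)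
        from by simp only [bracket]; push_cast; ring))
    have O2 : hcnt q d (bracket q d x0 0 x2 - (4*(q:ℤ)+(d:ℤ))) = 0 :=
      hcnt_odd hq hd (odd_helper hgcd
        (show _ = 2*((q:ℤ)*x0 + ((q:ℤ)+(d:ℤ))*(x2:ℤ) - 2*(q:ℤ) - (d:ℤ)) + (d:ℤ)
        from by simp only [bracket]; push_cast; ring))
    have O3 : hcnt q d (bracket q d x0 0 x2 - (4*(q:ℤ)+3*(d:ℤ))) = 0 :=
      hcnt_odd hq hd (odd_helper hgcd
        (show _ = 2*((q:ℤ)*x0 + ((q:ℤ)+(d:ℤ))*(x2:ℤ) - 2*(q:ℤ) - 2*(d:ℤ)) + (d:ℤ)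
        from by simp only [bracket]; push_cast; ring))
    have O4 : hcnt q d (bracket q d x0 0 x2 - (6*(q:ℤ)+3*(d:ℤ))) = 0 :=
      hcnt_odd hq hd (odd_helper hgcd
        (show _ = 2*((q:ℤ)*x0 + ((q:ℤ)+(d:ℤ))*(x2:ℤ) - 3*(q:ℤ) - 2*(d:ℤ)) + (d:ℤ)
        from by simp only [bracket]; push_cast; ring))
    rw [fF, E1, E2, E3, E4, O1, O2, O3, O4]
    rw [multC_shift (q := q) (d := d) 1 (x0 - (x2:ℤ)),
      multC_shift (q := q) (d := d) (-1) (x0 - (x2:ℤ)),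
      show x0 - (x2:ℤ) - (-1:ℤ) = x0 - (x2:ℤ) + 1 from by ring]
    push_cast
    ring
  · have E1 : hcnt q d (bracket q d x0 1 x2 - (2*(q:ℤ)+(d:ℤ)))
        = multC q d 0 (x0 - (x2:ℤ)) := by
      rw [show bracket q d x0 1 x2 - (2*(q:ℤ)+(d:ℤ))
        = 2*((q:ℤ)*(x0 - (x2:ℤ)) + (2*(q:ℤ)+(d:ℤ))*((x2:ℕ):ℤ))
        from by simp only [bracket]; push_cast; ring, hcnt_even,
        h2_eval hq hd hgcd (x0 - (x2:ℤ)) x2 hx2q]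
    have E2 : hcnt q d (bracket q d x0 1 x2 - (4*(q:ℤ)+(d:ℤ)))
        = multC q d 0 (x0 - (x2:ℤ) - 1) := by
      rw [show bracket q d x0 1 x2 - (4*(q:ℤ)+(d:ℤ))
        = 2*((q:ℤ)*(x0 - (x2:ℤ) - 1) + (2*(q:ℤ)+(d:ℤ))*((x2:ℕ):ℤ))
        from by simp only [bracket]; push_cast; ring, hcnt_even,
        h2_eval hq hd hgcd (x0 - (x2:ℤ) - 1) x2 hx2q]
    have E3 : hcnt q d (bracket q d x0 1 x2 - (4*(q:ℤ)+3*(d:ℤ)))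
        = multC q d 0 (x0 - (x2:ℤ) + 1) := by
      rw [show bracket q d x0 1 x2 - (4*(q:ℤ)+3*(d:ℤ))
        = 2*((q:ℤ)*(x0 - (x2:ℤ) + 1) + (2*(q:ℤ)+(d:ℤ))*((x2 - 1 : ℕ):ℤ))
        from by rw [hc]; simp only [bracket]; push_cast; ring, hcnt_even,
        h2_eval hq hd hgcd (x0 - (x2:ℤ) + 1) (x2 - 1) hx2q']
    have E4 : hcnt q d (bracket q d x0 1 x2 - (6*(q:ℤ)+3*(d:ℤ)))
        = multC q d 0 (x0 - (x2:ℤ)) := by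
      rw [show bracket q d x0 1 x2 - (6*(q:ℤ)+3*(d:ℤ))
        = 2*((q:ℤ)*(x0 - (x2:ℤ)) + (2*(q:ℤ)+(d:ℤ))*((x2 - 1 : ℕ):ℤ))
        from by rw [hc]; simp only [bracket]; push_cast; ring, hcnt_even,
        h2_eval hq hd hgcd (x0 - (x2:ℤ)) (x2 - 1) hx2q']
    have O1 : hcnt q d (bracket q d x0 1 x2) = 0 :=
      hcnt_odd hq hd (odd_helper hgcd
        (show _ = 2*((q:ℤ)*x0 + ((q:ℤ)+(d:ℤ))*(x2:ℤ) + (q:ℤ)) + (d:ℤ)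
        from by simp only [bracket]; push_cast; ring))
    have O2 : hcnt q d (bracket q d x0 1 x2 - 2*(q:ℤ)) = 0 :=
      hcnt_odd hq hd (odd_helper hgcd
        (show _ = 2*((q:ℤ)*x0 + ((q:ℤ)+(d:ℤ))*(x2:ℤ)) + (d:ℤ)
        from by simp only [bracket]; push_cast; ring))
    have O3 : hcnt q d (bracket q d x0 1 x2 - (2*(q:ℤ)+2*(d:ℤ))) = 0 :=
      hcnt_odd hq hd (odd_helper hgcd
        (show _ = 2*((q:ℤ)*x0 + ((q:ℤ)+(d:ℤ))*(x2:ℤ) - (d:ℤ)) + (d:ℤ)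
        from by simp only [bracket]; push_cast; ring))
    have O4 : hcnt q d (bracket q d x0 1 x2 - (4*(q:ℤ)+2*(d:ℤ))) = 0 :=
      hcnt_odd hq hd (odd_helper hgcd
        (show _ = 2*((q:ℤ)*x0 + ((q:ℤ)+(d:ℤ))*(x2:ℤ) - (q:ℤ) - (d:ℤ)) + (d:ℤ)
        from by simp only [bracket]; push_cast; ring))
    rw [fF, E1, E2, E3, E4, O1, O2, O3, O4]
    rw [multC_shift (q := q) (d := d) 1 (x0 - (x2:ℤ)),
      multC_shift (q := q) (d := d) (-1) (x0 - (x2:ℤ)),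
      show x0 - (x2:ℤ) - (-1:ℤ) = x0 - (x2:ℤ) + 1 from by ring]
    push_cast
    ring

end Final

end MECaux

theorem mobius_explicit_formula_even_case
    (q d : ℕ) (hq : 2 ≤ q) (hd : 1 ≤ d) (hgcd : Nat.gcd (2 * q) d = 1)
    (S : Set ℤ)
    (hS : S = {z : ℤ | ∃ c0 c1 c2 : ℕ,
      z = (c0 : ℤ) * (2 * (q : ℤ)) + (c1 : ℤ) * (2 * (q : ℤ) + d) +
          (c2 : ℤ) * (2 * (q : ℤ) + 2 * d)})
    (x0 : ℤ) (x1 x2 : ℕ) (hx1 : x1 ≤ 1) (hx2 : x2 ≤ q - 1) :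
    (x2 = 0 →
      mobiusRed S (bracket q d x0 x1 0) =
        (-1) ^ x1 * ((multA q d 0 x0 : ℤ) - (multA q d 1 x0 : ℤ) +
          2 * (multB q d 0 x0 : ℤ) - (multB q d (-1) x0 : ℤ) - (multB q d 1 x0 : ℤ))) ∧
    (1 ≤ x2 →
      mobiusRed S (bracket q d x0 x1 x2) =
        (-1) ^ x1 * (2 * (multC q d 0 (x0 - x2) : ℤ) -
          (multC q d (-1) (x0 - x2) : ℤ) - (multC q d 1 (x0 - x2) : ℤ))) := by
  have hSE : MECaux.SEq q d S := hS
  constructor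
  · intro _
    rw [MECaux.mob_eq_fF hq hd hgcd hSE]
    exact MECaux.fF_eval_zero hq hd hgcd x0 x1 hx1
  · intro hx2l
    rw [MECaux.mob_eq_fF hq hd hgcd hSE]
    exact MECaux.fF_eval_pos hq hd hgcd x0 x1 x2 hx1 hx2l hx2
end
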